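/- arXiv:2411.16121 — 7 statements merged into one kernel-verified Lean document; each statement's English description precedes it below -/
import Mathlib

section
/- For every real α > 1, every σ > 0, and all μ, μ' ∈ ℝ, the Rényi divergence of order α between the one-dimensional Gaussian measures N(μ, σ²) and N(μ', σ²) equals α(μ − μ')²/(2σ²). -/
open MeasureTheory ProbabilityTheory Real
open scoped Classical NNReal ENNReal

/-- The Rényi divergence of order `α` between measures `P` and `Q`:
`D_α(P‖Q) = (α−1)⁻¹ log ∫ (dP/dQ)^α dQ` if `P ≪ Q`, and `∞` otherwise. -/
noncomputable def renyiDiv {X : Type*} [MeasurableSpace X] (α : ℝ) (P Q : Measure X) : EReal :=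
  if P ≪ Q then (((α - 1)⁻¹ : ℝ) : EReal) * ENNReal.log (∫⁻ x, P.rnDeriv Q x ^ α ∂Q) else ⊤

lemma renyi_key_real (α : ℝ) {v : ℝ≥0} (hv : (0:ℝ) < v) (μ μ' x : ℝ) :
    gaussianPDFReal μ' v x * ((gaussianPDFReal μ' v x)⁻¹ * gaussianPDFReal μ v x) ^ α
      = rexp (α * (α - 1) * (μ - μ') ^ 2 / (2 * v))
        * gaussianPDFReal (α * μ + (1 - α) * μ') v x := by
  simp only [gaussianPDFReal]
  have hc : (0:ℝ) < (√(2 * π * v))⁻¹ := by positivity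
  set c : ℝ := (√(2 * π * v))⁻¹ with hc_def
  set A : ℝ := -(x - μ) ^ 2 / (2 * v) with hA
  set B : ℝ := -(x - μ') ^ 2 / (2 * v) with hB
  have h1 : (c * rexp B)⁻¹ * (c * rexp A) = rexp (A - B) := by
    rw [Real.exp_sub]
    field_simp [hc.ne', Real.exp_ne_zero]
  rw [h1, ← Real.exp_mul, mul_assoc, ← Real.exp_add]
  have h2 : B + (A - B) * α = α * (α - 1) * (μ - μ') ^ 2 / (2 * v)
      + -(x - (α * μ + (1 - α) * μ')) ^ 2 / (2 * v) := by
    rw [hA, hB]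
    field_simp
    ring
  rw [h2, Real.exp_add]
  ring

/-- **Rényi divergence between equal-variance one-dimensional Gaussians.**
For every `α > 1`, `σ > 0` and means `μ, μ'`,
`D_α(N(μ, σ²) ‖ N(μ', σ²)) = α (μ − μ')² / (2σ²)`. -/
theorem renyiDiv_gaussianReal (α σ μ μ' : ℝ) (hα : 1 < α) (hσ : 0 < σ) :
    renyiDiv α (gaussianReal μ (σ ^ 2).toNNReal) (gaussianReal μ' (σ ^ 2).toNNReal)
      = ((α * (μ - μ') ^ 2 / (2 * σ ^ 2) : ℝ) : EReal) := by
  set v : ℝ≥0 := (σ ^ 2).toNNReal with hv_def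
  have hv0 : (v : ℝ) = σ ^ 2 := Real.coe_toNNReal _ (by positivity)
  have hvpos : (0:ℝ) < v := by rw [hv0]; positivity
  have hv : v ≠ 0 := by
    intro h
    rw [h] at hvpos
    simp at hvpos
  have hPQ : gaussianReal μ v ≪ gaussianReal μ' v :=
    (gaussianReal_absolutelyContinuous μ hv).trans (gaussianReal_absolutelyContinuous' μ' hv)
  have hQvol : gaussianReal μ' v ≪ volume := gaussianReal_absolutelyContinuous μ' hv
  rw [renyiDiv, if_pos hPQ]
  set m : ℝ := α * μ + (1 - α) * μ' with hm
  set C : ℝ := rexp (α * (α - 1) * (μ - μ') ^ 2 / (2 * v)) with hC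
  -- Radon–Nikodym derivative of P with respect to Q, a.e. w.r.t. volume
  have h_rn : (gaussianReal μ v).rnDeriv (gaussianReal μ' v)
      =ᵐ[volume] fun x ↦ (gaussianPDF μ' v x)⁻¹ * gaussianPDF μ v x := by
    have h1 : (gaussianReal μ v).rnDeriv (volume.withDensity (gaussianPDF μ' v))
        =ᵐ[volume] fun x ↦ (gaussianPDF μ' v x)⁻¹ * (gaussianReal μ v).rnDeriv volume x :=
      MeasureTheory.Measure.rnDeriv_withDensity_right _ _
        (measurable_gaussianPDF μ' v).aemeasurable
        (ae_of_all _ fun x ↦ (gaussianPDF_pos μ' hv x).ne')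
        (ae_of_all _ fun x ↦ ENNReal.ofReal_ne_top)
    have h2 := rnDeriv_gaussianReal μ v
    rw [← gaussianReal_of_var_ne_zero μ' hv] at h1
    filter_upwards [h1, h2] with x hx1 hx2
    rw [hx1, hx2]
  -- pointwise computation
  have hpt : ∀ x, gaussianPDF μ' v x * ((gaussianPDF μ' v x)⁻¹ * gaussianPDF μ v x) ^ α
      = ENNReal.ofReal C * gaussianPDF m v x := by
    intro x
    have h'pos := gaussianPDFReal_pos μ' v x hv
    have hpos := gaussianPDFReal_pos μ v x hv
    rw [gaussianPDF, gaussianPDF, gaussianPDF,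
      ← ENNReal.ofReal_inv_of_pos h'pos,
      ← ENNReal.ofReal_mul (by positivity),
      ENNReal.ofReal_rpow_of_pos (by positivity),
      ← ENNReal.ofReal_mul (gaussianPDFReal_nonneg _ _ _),
      ← ENNReal.ofReal_mul (Real.exp_pos _).le]
    congr 1
    exact renyi_key_real α hvpos μ μ' x
  -- compute the lintegral
  have hmeas : Measurable fun x ↦ ((gaussianPDF μ' v x)⁻¹ * gaussianPDF μ v x) ^ α :=
    ((measurable_gaussianPDF μ' v).inv.mul (measurable_gaussianPDF μ v)).pow_const α
  have hint : ∫⁻ x, (gaussianReal μ v).rnDeriv (gaussianReal μ' v) x ^ α ∂(gaussianReal μ' v)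
      = ENNReal.ofReal C := by
    have h_ae : (fun x ↦ (gaussianReal μ v).rnDeriv (gaussianReal μ' v) x ^ α)
        =ᵐ[gaussianReal μ' v] fun x ↦ ((gaussianPDF μ' v x)⁻¹ * gaussianPDF μ v x) ^ α := by
      filter_upwards [h_rn.filter_mono hQvol.ae_le] with x hx
      rw [hx]
    rw [lintegral_congr_ae h_ae, gaussianReal_of_var_ne_zero _ hv,
      lintegral_withDensity_eq_lintegral_mul _ (measurable_gaussianPDF μ' v) hmeas]
    simp only [Pi.mul_apply]
    rw [lintegral_congr fun x ↦ hpt x,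
      lintegral_const_mul _ (measurable_gaussianPDF m v),
      lintegral_gaussianPDF_eq_one m hv, mul_one]
  rw [hint, ENNReal.log_ofReal_of_pos (Real.exp_pos _), Real.log_exp,
    ← EReal.coe_mul]
  congr 1
  rw [hv0]
  have hα1 : α - 1 ≠ 0 := by linarith
  field_simp
end

section
/- Let P and Q be probability measures on a measurable space X, and let κ, η be Markov kernels from X to a measurable space Y. Fix α > 1 and ε₁, ε₂ ≥ 0. If D_α(P‖Q) ≤ ε₁ and D_α(κ(x)‖η(x)) ≤ ε₂ for every x ∈ X, then the compound measures satisfy D_α(P ⊗ κ ‖ Q ⊗ η) ≤ ε₁ + ε₂, where P ⊗ κ denotes the measure on X × Y given by (P ⊗ κ)(A) = ∫ κ(x)(A_x) dP(x). (Adaptive composition of Rényi differential privacy: if the first mechanism is (α, ε₁)-RDP and the second, which may depend on the first output, is (α, ε₂)-RDP, the pair is (α, ε₁ + ε₂)-RDP.) -/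
open MeasureTheory ProbabilityTheory Real
open scoped Classical ENNReal

/-- Reverse-Hölder / joint-convexity inequality in `ℝ≥0∞`. -/
lemma hoelder_key {Z : Type*} [MeasurableSpace Z] {m : Measure Z} {u v : Z → ℝ≥0∞}
    (hu : Measurable u) (hv : Measurable v) {α : ℝ} (hα : 1 < α)
    (hv_top : ∫⁻ z, v z ∂m ≠ ∞)
    (huv : ∀ᵐ z ∂m, v z = 0 → u z = 0)
    (hv_fin : ∀ᵐ z ∂m, v z ≠ ∞) :
    (∫⁻ z, u z ∂m) ^ α * (∫⁻ z, v z ∂m) ^ (1 - α) ≤ ∫⁻ z, u z ^ α * v z ^ (1 - α) ∂m := by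
  have hα0 : (0:ℝ) < α := by linarith
  have hα1 : (0:ℝ) < α - 1 := by linarith
  set A := ∫⁻ z, u z ^ α * v z ^ (1 - α) ∂m with hA
  set B := ∫⁻ z, v z ∂m with hB
  by_cases hB0 : B = 0
  · have hv0 : v =ᵐ[m] 0 := (lintegral_eq_zero_iff hv).mp hB0
    have hu0 : u =ᵐ[m] 0 := by
      filter_upwards [hv0, huv] with z hz hz' using hz' hz
    have : ∫⁻ z, u z ∂m = 0 := by
      rw [lintegral_congr_ae hu0]; simp
    rw [this, hB0]
    rw [ENNReal.zero_rpow_of_pos hα0]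
    simp
  by_cases hAtop : A = ∞
  · rw [hAtop]; exact le_top
  have hBt : B ≠ ∞ := hv_top
  -- Hölder
  have hpq : α.HolderConjugate (α / (α - 1)) := Real.HolderConjugate.conjExponent hα
  have h_eq : u =ᵐ[m] fun z => (u z ^ α * v z ^ (1 - α)) ^ α⁻¹ * v z ^ ((α - 1) / α) := by
    filter_upwards [huv, hv_fin] with z hz hzt
    rcases eq_or_ne (v z) 0 with hv0 | hv0
    · rw [hz hv0, hv0]
      rw [ENNReal.zero_rpow_of_pos (by positivity : (0:ℝ) < (α-1)/α)]
      simp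
    · rcases eq_or_ne (u z) 0 with hu0 | hu0
      · rw [hu0, ENNReal.zero_rpow_of_pos hα0, zero_mul,
          ENNReal.zero_rpow_of_pos (by positivity : (0:ℝ) < α⁻¹), zero_mul]
      · have hh1 : u z ^ α ≠ 0 := by
          intro h
          rcases ENNReal.rpow_eq_zero_iff.mp h with ⟨h', _⟩ | ⟨_, h'⟩
          · exact hu0 h'
          · linarith
        have hh2 : v z ^ (1 - α) ≠ 0 := by
          intro h
          rcases ENNReal.rpow_eq_zero_iff.mp h with ⟨h', _⟩ | ⟨h', _⟩
          · exact hv0 h'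
          · exact hzt h'
        rw [ENNReal.mul_rpow_of_ne_zero hh1 hh2,
          ← ENNReal.rpow_mul, ← ENNReal.rpow_mul, mul_inv_cancel₀ hα0.ne', ENNReal.rpow_one,
          mul_assoc, ← ENNReal.rpow_add _ _ hv0 hzt]
        have : (1 - α) * α⁻¹ + (α - 1) / α = 0 := by field_simp; ring
        rw [this, ENNReal.rpow_zero, mul_one]
  have h_holder : ∫⁻ z, u z ∂m ≤ A ^ α⁻¹ * B ^ ((α-1)/α) := by
    rw [lintegral_congr_ae h_eq]
    have := ENNReal.lintegral_mul_le_Lp_mul_Lq m hpq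
      (f := fun z => (u z ^ α * v z ^ (1 - α)) ^ α⁻¹)
      (g := fun z => v z ^ ((α - 1) / α))
      (((hu.pow_const α).mul (hv.pow_const (1-α))).pow_const α⁻¹).aemeasurable
      ((hv.pow_const _)).aemeasurable
    refine this.trans_eq ?_
    congr 1
    · rw [one_div]
      congr 1
      refine lintegral_congr fun z => ?_
      rw [← ENNReal.rpow_mul, inv_mul_cancel₀ hα0.ne', ENNReal.rpow_one]
    · rw [one_div]
      have hq : ((α-1)/α) * (α / (α - 1)) = 1 := by field_simp
      have h1 : (α / (α - 1))⁻¹ = (α-1)/α := by field_simp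
      rw [h1]
      congr 1
      refine lintegral_congr fun z => ?_
      rw [← ENNReal.rpow_mul, hq, ENNReal.rpow_one]
  -- raise to power α
  have h2 : (∫⁻ z, u z ∂m) ^ α ≤ A * B ^ (α - 1) := by
    calc (∫⁻ z, u z ∂m) ^ α ≤ (A ^ α⁻¹ * B ^ ((α-1)/α)) ^ α :=
          ENNReal.rpow_le_rpow h_holder hα0.le
      _ = A * B ^ (α - 1) := by
          rw [ENNReal.mul_rpow_of_ne_top (ENNReal.rpow_ne_top_of_nonneg (by positivity) hAtop)
              (ENNReal.rpow_ne_top_of_nonneg (by positivity) hBt),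
            ← ENNReal.rpow_mul, ← ENNReal.rpow_mul, inv_mul_cancel₀ hα0.ne', ENNReal.rpow_one]
          congr 2
          field_simp
  calc (∫⁻ z, u z ∂m) ^ α * B ^ (1 - α) ≤ (A * B ^ (α - 1)) * B ^ (1 - α) :=
        mul_le_mul_left h2 _
    _ = A := by
        rw [mul_assoc, ← ENNReal.rpow_add _ _ hB0 hBt]
        norm_num

/-- `renyiDiv ≤ ε` iff absolute continuity and a moment bound. -/
lemma renyiDiv_le_coe_iff {X : Type*} [MeasurableSpace X] {α ε : ℝ} (hα : 1 < α)
    (P Q : Measure X) :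
    renyiDiv α P Q ≤ ((ε : ℝ) : EReal) ↔
      P ≪ Q ∧ ∫⁻ x, P.rnDeriv Q x ^ α ∂Q ≤ EReal.exp (((α - 1) * ε : ℝ) : EReal) := by
  have hα1 : (0:ℝ) < α - 1 := by linarith
  rw [renyiDiv]
  by_cases hac : P ≪ Q
  · rw [if_pos hac]
    simp only [hac, true_and]
    set L := ENNReal.log (∫⁻ x, P.rnDeriv Q x ^ α ∂Q) with hL
    rw [mul_comm]
    rw [← EReal.le_div_iff_mul_le (by exact_mod_cast (by positivity : (0:ℝ) < (α-1)⁻¹))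
      (EReal.coe_ne_top _)]
    have hdiv : ((ε : ℝ) : EReal) / (((α - 1)⁻¹ : ℝ) : EReal) = (((α - 1) * ε : ℝ) : EReal) := by
      rw [div_eq_mul_inv, ← EReal.coe_inv, inv_inv, ← EReal.coe_mul, mul_comm]
    rw [hdiv, hL]
    conv_lhs => rw [← EReal.log_exp (((α - 1) * ε : ℝ) : EReal)]
    exact ENNReal.log_le_log_iff
  · rw [if_neg hac]
    simp only [hac, false_and, iff_false]
    rw [top_le_iff]
    simp

lemma core_bound {X Y : Type*} [MeasurableSpace X] [MeasurableSpace Y]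
    (P Q : Measure X) [IsProbabilityMeasure P] [IsProbabilityMeasure Q]
    (κ η : Kernel X Y) [IsMarkovKernel κ] [IsMarkovKernel η]
    {α : ℝ} (hα : 1 < α) (hPQ : P ≪ Q) (hκη : ∀ x, κ x ≪ η x)
    {C₂ : ℝ≥0∞}
    (h2 : ∀ x, ∫⁻ y, (κ x).rnDeriv (η x) y ^ α ∂(η x) ≤ C₂) :
    ∫⁻ p, (P ⊗ₘ κ).rnDeriv (Q ⊗ₘ η) p ^ α ∂(Q ⊗ₘ η)
      ≤ (∫⁻ x, P.rnDeriv Q x ^ α ∂Q) * C₂ := by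
  have hα0 : (0:ℝ) < α := by linarith
  have hν : (P ⊗ₘ κ) ≪ (Q ⊗ₘ η) :=
    Measure.AbsolutelyContinuous.compProd hPQ (Filter.Eventually.of_forall hκη)
  set μ := Q ⊗ₘ η with hμdef
  set ν := P ⊗ₘ κ with hνdef
  have hf : Measurable (ν.rnDeriv μ) := Measure.measurable_rnDeriv ν μ
  have hg : Measurable (P.rnDeriv Q) := Measure.measurable_rnDeriv _ _
  have hC2top : C₂ ≠ ∞ → True := fun _ => trivial
  rw [MeasureTheory.lintegral_def]
  refine iSup₂_le fun φ hφ => ?_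
  rw [SimpleFunc.lintegral]
  -- notation for fibers and slices
  set T : ℝ≥0∞ → Set (X × Y) := fun c => φ ⁻¹' {c} with hTdef
  have hT : ∀ c, MeasurableSet (T c) := fun c => φ.measurableSet_fiber c
  set Sl : ℝ≥0∞ → X → Set Y := fun c x => Prod.mk x ⁻¹' (T c) with hSldef
  have hSl : ∀ c x, MeasurableSet (Sl c x) := fun c x => measurable_prodMk_left (hT c)
  set u : ℝ≥0∞ → X → ℝ≥0∞ := fun c x => P.rnDeriv Q x * κ x (Sl c x) with hudef
  set v : ℝ≥0∞ → X → ℝ≥0∞ := fun c x => η x (Sl c x) with hvdef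
  have hmean : ∀ c, Measurable (fun x => κ x (Sl c x)) :=
    fun c => Kernel.measurable_kernel_prodMk_left (hT c)
  have hmu : ∀ c, Measurable (u c) := fun c => hg.mul (hmean c)
  have hmv : ∀ c, Measurable (v c) := fun c => Kernel.measurable_kernel_prodMk_left (hT c)
  have hu_int : ∀ c, ∫⁻ x, u c x ∂Q = ν (T c) := by
    intro c
    rw [hνdef, Measure.compProd_apply (hT c), ← Measure.withDensity_rnDeriv_eq P Q hPQ,
      lintegral_withDensity_eq_lintegral_mul _ hg (hmean c)]
    rfl
  have hv_int : ∀ c, ∫⁻ x, v c x ∂Q = μ (T c) := by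
    intro c
    rw [hμdef, Measure.compProd_apply (hT c)]
  -- step 1 : per-value bound by the Hölder integral
  have step1 : ∀ c ∈ φ.range, c * μ (T c) ≤
      ∫⁻ x, u c x ^ α * v c x ^ (1 - α) ∂Q := by
    intro c _
    have part2 : ν (T c) ^ α * μ (T c) ^ (1 - α) ≤
        ∫⁻ x, u c x ^ α * v c x ^ (1 - α) ∂Q := by
      rw [← hu_int c, ← hv_int c]
      refine hoelder_key (hmu c) (hmv c) hα ?_ ?_ ?_
      · rw [hv_int c]; exact measure_ne_top μ _
      · refine Filter.Eventually.of_forall fun x hx => ?_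
        rw [hudef]
        simp only []
        rw [hκη x hx, mul_zero]
      · exact Filter.Eventually.of_forall fun x => measure_ne_top _ _
    refine le_trans ?_ part2
    rcases eq_or_ne c 0 with hc0 | hc0
    · simp [hc0]
    rcases eq_or_ne (μ (T c)) 0 with hT0 | hT0
    · simp [hT0]
    have hTt : μ (T c) ≠ ∞ := measure_ne_top μ _
    have h1 : c ^ α⁻¹ * μ (T c) ≤ ν (T c) := by
      calc c ^ α⁻¹ * μ (T c) = ∫⁻ _ in T c, c ^ α⁻¹ ∂μ := (setLIntegral_const _ _).symm
        _ ≤ ∫⁻ p in T c, ν.rnDeriv μ p ∂μ := by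
            refine setLIntegral_mono hf fun p hp => ?_
            have hcp : c ≤ ν.rnDeriv μ p ^ α := by
              have := hφ p
              have hpc : φ p = c := hp
              rw [hpc] at this
              exact this
            have := ENNReal.rpow_le_rpow hcp (by positivity : (0:ℝ) ≤ α⁻¹)
            rwa [← ENNReal.rpow_mul, mul_inv_cancel₀ hα0.ne', ENNReal.rpow_one] at this
        _ = ν (T c) := Measure.setLIntegral_rnDeriv hν _
    have h2' : c * μ (T c) ^ α ≤ ν (T c) ^ α := by
      have := ENNReal.rpow_le_rpow h1 hα0.le
      rwa [ENNReal.mul_rpow_of_ne_zero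
          (by
            intro h
            rcases ENNReal.rpow_eq_zero_iff.mp h with ⟨h', _⟩ | ⟨_, h'⟩
            · exact hc0 h'
            · have : (0:ℝ) < α⁻¹ := by positivity
              linarith) hT0,
        ← ENNReal.rpow_mul, inv_mul_cancel₀ hα0.ne', ENNReal.rpow_one] at this
    calc c * μ (T c) = c * μ (T c) ^ α * μ (T c) ^ (1 - α) := by
          rw [mul_assoc, ← ENNReal.rpow_add _ _ hT0 hTt]
          norm_num
      _ ≤ ν (T c) ^ α * μ (T c) ^ (1 - α) := mul_le_mul_left h2' _
  -- step 2 : pointwise-in-x bound for the summed integrand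
  have step2 : ∀ x, (∑ c ∈ φ.range, u c x ^ α * v c x ^ (1 - α))
      ≤ P.rnDeriv Q x ^ α * C₂ := by
    intro x
    set r := (κ x).rnDeriv (η x) with hrdef
    have hr : Measurable r := Measure.measurable_rnDeriv _ _
    have key : ∀ c, κ x (Sl c x) ^ α * η x (Sl c x) ^ (1 - α)
        ≤ ∫⁻ y in Sl c x, r y ^ α ∂(η x) := by
      intro c
      have h := hoelder_key (m := (η x).restrict (Sl c x)) (u := r) (v := fun _ => 1)
        hr measurable_const hα
        (by rw [lintegral_one, Measure.restrict_apply_univ]; exact measure_ne_top _ _)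
        (Filter.Eventually.of_forall fun y h => absurd h one_ne_zero)
        (Filter.Eventually.of_forall fun y => ENNReal.one_ne_top)
      rw [lintegral_one, Measure.restrict_apply_univ,
        Measure.setLIntegral_rnDeriv (hκη x) _] at h
      refine h.trans_eq ?_
      refine lintegral_congr fun y => ?_
      rw [ENNReal.one_rpow, mul_one]
    calc (∑ c ∈ φ.range, u c x ^ α * v c x ^ (1 - α))
        = P.rnDeriv Q x ^ α * ∑ c ∈ φ.range, κ x (Sl c x) ^ α * η x (Sl c x) ^ (1 - α) := by
          rw [Finset.mul_sum]
          refine Finset.sum_congr rfl fun c _ => ?_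
          rw [hudef]
          simp only []
          rw [ENNReal.mul_rpow_of_nonneg _ _ hα0.le, mul_assoc]
      _ ≤ P.rnDeriv Q x ^ α * C₂ := by
          refine mul_le_mul_right ?_ _
          calc (∑ c ∈ φ.range, κ x (Sl c x) ^ α * η x (Sl c x) ^ (1 - α))
              ≤ ∑ c ∈ φ.range, ∫⁻ y in Sl c x, r y ^ α ∂(η x) :=
                Finset.sum_le_sum fun c _ => key c
            _ = ∫⁻ y in ⋃ c ∈ φ.range, Sl c x, r y ^ α ∂(η x) := by
                refine (lintegral_biUnion_finset ?_ (fun c _ => hSl c x) _).symm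
                intro a _ b _ hab
                rw [Function.onFun, Set.disjoint_left]
                intro y hy hy'
                exact hab (by
                  simp only [hSldef, hTdef, Set.mem_preimage, Set.mem_singleton_iff] at hy hy'
                  rw [← hy, ← hy'])
            _ ≤ C₂ := by
                have hunion : (⋃ c ∈ φ.range, Sl c x) = Set.univ := by
                  ext y
                  simp only [Set.mem_iUnion, Set.mem_univ, iff_true]
                  exact ⟨φ (x, y), φ.mem_range_self (x, y), rfl⟩
                rw [hunion, Measure.restrict_univ]
                exact h2 x
  -- combine
  calc (∑ c ∈ φ.range, c * μ (T c))
      ≤ ∑ c ∈ φ.range, ∫⁻ x, u c x ^ α * v c x ^ (1 - α) ∂Q :=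
        Finset.sum_le_sum step1
    _ = ∫⁻ x, ∑ c ∈ φ.range, u c x ^ α * v c x ^ (1 - α) ∂Q :=
        (lintegral_finset_sum _ fun c _ => ((hmu c).pow_const α).mul
          ((hmv c).pow_const (1 - α))).symm
    _ ≤ ∫⁻ x, P.rnDeriv Q x ^ α * C₂ ∂Q := lintegral_mono step2
    _ = (∫⁻ x, P.rnDeriv Q x ^ α ∂Q) * C₂ := lintegral_mul_const _ (hg.pow_const α)

open scoped ProbabilityTheory in
/-- **Adaptive composition for Rényi divergence / RDP.**
If `D_α(P‖Q) ≤ ε₁` and `D_α(κ(x)‖η(x)) ≤ ε₂` for every `x`, then the compound measures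
satisfy `D_α(P ⊗ κ ‖ Q ⊗ η) ≤ ε₁ + ε₂`. -/
theorem renyiDiv_compProd_le {X Y : Type*} [MeasurableSpace X] [MeasurableSpace Y]
    (P Q : Measure X) [IsProbabilityMeasure P] [IsProbabilityMeasure Q]
    (κ η : Kernel X Y) [IsMarkovKernel κ] [IsMarkovKernel η]
    (α ε₁ ε₂ : ℝ) (hα : 1 < α) (hε₁ : 0 ≤ ε₁) (hε₂ : 0 ≤ ε₂)
    (h₁ : renyiDiv α P Q ≤ ((ε₁ : ℝ) : EReal))
    (h₂ : ∀ x, renyiDiv α (κ x) (η x) ≤ ((ε₂ : ℝ) : EReal)) :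
    renyiDiv α (P ⊗ₘ κ) (Q ⊗ₘ η) ≤ ((ε₁ + ε₂ : ℝ) : EReal) := by
  obtain ⟨hPQ, h1'⟩ := (renyiDiv_le_coe_iff hα P Q).mp h₁
  have hκη : ∀ x, κ x ≪ η x := fun x => ((renyiDiv_le_coe_iff hα (κ x) (η x)).mp (h₂ x)).1
  have h2' : ∀ x, ∫⁻ y, (κ x).rnDeriv (η x) y ^ α ∂(η x)
      ≤ EReal.exp (((α - 1) * ε₂ : ℝ) : EReal) :=
    fun x => ((renyiDiv_le_coe_iff hα (κ x) (η x)).mp (h₂ x)).2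
  have hν : (P ⊗ₘ κ) ≪ (Q ⊗ₘ η) :=
    Measure.AbsolutelyContinuous.compProd hPQ (Filter.Eventually.of_forall hκη)
  rw [renyiDiv_le_coe_iff hα]
  refine ⟨hν, ?_⟩
  calc ∫⁻ p, (P ⊗ₘ κ).rnDeriv (Q ⊗ₘ η) p ^ α ∂(Q ⊗ₘ η)
      ≤ (∫⁻ x, P.rnDeriv Q x ^ α ∂Q) * EReal.exp (((α - 1) * ε₂ : ℝ) : EReal) :=
        core_bound P Q κ η hα hPQ hκη h2'
    _ ≤ EReal.exp (((α - 1) * ε₁ : ℝ) : EReal) * EReal.exp (((α - 1) * ε₂ : ℝ) : EReal) :=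
        mul_le_mul_left h1' _
    _ = EReal.exp (((α - 1) * (ε₁ + ε₂) : ℝ) : EReal) := by
        rw [← EReal.exp_add, ← EReal.coe_add]
        congr 2
        ring
end

section
/- Let P and Q be probability measures on a measurable space X, let α > 1, ε_r ≥ 0, and 0 < δ < 1. If D_α(P‖Q) ≤ ε_r, then for every measurable set S ⊆ X, P(S) ≤ exp(ε_r + log(1/δ)/(α − 1)) · Q(S) + δ. (Conversion from (α, ε_r)-Rényi differential privacy to (ε_r + log(1/δ)/(α−1), δ)-differential privacy.) -/
open MeasureTheory ProbabilityTheory Real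
open scoped Classical

/-- **From Rényi differential privacy to approximate differential privacy.**
If `D_α(P‖Q) ≤ ε_r` with `α > 1` and `0 < δ < 1`, then for every measurable `S`,
`P(S) ≤ exp(ε_r + log(1/δ)/(α−1)) · Q(S) + δ`. -/
theorem rdp_to_dp {X : Type*} [MeasurableSpace X]
    (P Q : Measure X) [IsProbabilityMeasure P] [IsProbabilityMeasure Q]
    (α εr δ : ℝ) (hα : 1 < α) (hεr : 0 ≤ εr) (hδ : 0 < δ) (hδ1 : δ < 1)
    (h : renyiDiv α P Q ≤ ((εr : ℝ) : EReal)) :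
    ∀ S : Set X, MeasurableSet S →
      P S ≤ ENNReal.ofReal (Real.exp (εr + Real.log (1 / δ) / (α - 1))) * Q S
        + ENNReal.ofReal δ := by
  intro S hS
  have hα1 : (0:ℝ) < α - 1 := by linarith
  have hac : P ≪ Q := by
    by_contra hac
    rw [renyiDiv, if_neg hac] at h
    exact absurd h (by simp)
  rw [renyiDiv, if_pos hac] at h
  set f := P.rnDeriv Q with hf
  have hfm : Measurable f := Measure.measurable_rnDeriv P Q
  set I := ∫⁻ x, f x ^ α ∂Q with hI
  have hlog : ENNReal.log I ≤ (((α - 1) * εr : ℝ) : EReal) := by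
    have h2 : ENNReal.log I / ((α - 1 : ℝ) : EReal) ≤ ((εr : ℝ) : EReal) := by
      rw [EReal.div_eq_inv_mul, ← EReal.coe_inv]
      exact h
    rw [EReal.div_le_iff_le_mul (by exact_mod_cast hα1) (EReal.coe_ne_top _)] at h2
    calc ENNReal.log I ≤ ((α - 1 : ℝ) : EReal) * ((εr : ℝ) : EReal) := h2
      _ = (((α - 1) * εr : ℝ) : EReal) := by rw [← EReal.coe_mul]
  have hIle : I ≤ ENNReal.ofReal (Real.exp ((α - 1) * εr)) := by
    have := EReal.exp_monotone hlog
    rwa [ENNReal.exp_log, EReal.exp_coe] at this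
  set ε := εr + Real.log (1 / δ) / (α - 1) with hε
  set t := ENNReal.ofReal (Real.exp ε) with ht
  have ht0 : t ≠ 0 := by simp [ht, Real.exp_pos]
  have httop : t ≠ ⊤ := ENNReal.ofReal_ne_top
  set A := {x | f x ≤ t} with hA
  have hAm : MeasurableSet A := hfm measurableSet_Iic
  have hPd : ∀ s : Set X, MeasurableSet s → P s = ∫⁻ x in s, f x ∂Q := by
    intro s hs
    rw [← Measure.withDensity_rnDeriv_eq P Q hac, withDensity_apply _ hs]
  have hb1 : P (S ∩ A) ≤ t * Q S := by
    rw [hPd _ (hS.inter hAm)]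
    calc ∫⁻ x in S ∩ A, f x ∂Q ≤ ∫⁻ _ in S ∩ A, t ∂Q :=
          setLIntegral_mono' (hS.inter hAm) fun x hx => hx.2
      _ = t * Q (S ∩ A) := by rw [setLIntegral_const]
      _ ≤ t * Q S := by gcongr; exact Set.inter_subset_left
  have hkey : (∫⁻ x in Aᶜ, f x ∂Q) * t ^ (α - 1) ≤ I := by
    rw [mul_comm, ← lintegral_const_mul _ hfm]
    calc ∫⁻ x in Aᶜ, t ^ (α - 1) * f x ∂Q
        ≤ ∫⁻ x in Aᶜ, f x ^ α ∂Q := by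
          refine setLIntegral_mono' hAm.compl fun x hx => ?_
          have hxt : t < f x := lt_of_not_ge hx
          calc t ^ (α - 1) * f x ≤ f x ^ (α - 1) * f x :=
                mul_le_mul_left (ENNReal.rpow_le_rpow hxt.le (by linarith)) _
            _ = f x ^ (α - 1) * f x ^ (1 : ℝ) := by rw [ENNReal.rpow_one]
            _ = f x ^ (α - 1 + 1) :=
                (ENNReal.rpow_add_of_nonneg _ _ (by linarith) zero_le_one).symm
            _ = f x ^ α := by norm_num
      _ ≤ I := setLIntegral_le_lintegral _ _
  have hnz : t ^ (α - 1) ≠ 0 := by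
    simp [ENNReal.rpow_eq_zero_iff_of_pos hα1, ht0]
  have hnt : t ^ (α - 1) ≠ ⊤ := by
    simp [ENNReal.rpow_eq_top_iff_of_pos hα1, httop]
  have htail : P Aᶜ ≤ ENNReal.ofReal δ := by
    rw [hPd _ hAm.compl]
    have h2 : ∫⁻ x in Aᶜ, f x ∂Q ≤ I / t ^ (α - 1) :=
      (ENNReal.le_div_iff_mul_le (Or.inl hnz) (Or.inl hnt)).2 hkey
    refine h2.trans ?_
    rw [ENNReal.div_eq_inv_mul, ← ENNReal.rpow_neg]
    have hteq : t ^ (-(α - 1)) = ENNReal.ofReal (Real.exp (ε * (-(α - 1)))) := by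
      rw [ht, ENNReal.ofReal_rpow_of_pos (Real.exp_pos ε),
        Real.rpow_def_of_pos (Real.exp_pos ε), Real.log_exp]
    calc t ^ (-(α - 1)) * I
        ≤ ENNReal.ofReal (Real.exp (ε * (-(α - 1)))) *
            ENNReal.ofReal (Real.exp ((α - 1) * εr)) := by
          rw [hteq]; exact mul_le_mul_right hIle _
      _ = ENNReal.ofReal (Real.exp (ε * (-(α - 1)) + (α - 1) * εr)) := by
          rw [← ENNReal.ofReal_mul (Real.exp_nonneg _), ← Real.exp_add]
      _ = ENNReal.ofReal δ := by
          congr 1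
          have : ε * (-(α - 1)) + (α - 1) * εr = Real.log δ := by
            rw [hε, one_div, Real.log_inv]
            field_simp
            ring
          rw [this, Real.exp_log hδ]
  calc P S ≤ P (S ∩ A) + P (S \ A) := measure_le_inter_add_diff P S A
    _ ≤ t * Q S + ENNReal.ofReal δ := by
        gcongr
        exact le_trans (measure_mono (Set.diff_subset_compl S A)) htail
end

section
/- Let P and Q be probability measures on a measurable space X, let f : X → Y be a measurable map into a measurable space Y, and let α > 1. Then D_α(f_*P ‖ f_*Q) ≤ D_α(P ‖ Q), where f_*P denotes the pushforward measure. (Data-processing inequality for Rényi divergence: any post-processing of a differentially private output, such as training a model on a differentially private synthetic dataset or taking an argmax of a noisy label vector, preserves the privacy guarantee.) -/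
open MeasureTheory ProbabilityTheory Real
open scoped Classical

lemma sup_min_rpow (a : ENNReal) {α : ℝ} (hα : 1 ≤ α) :
    ⨆ n : ℕ, (min a n) ^ α = a ^ α := by
  by_cases ha : a = ⊤
  · subst ha
    have h1 : ∀ n : ℕ, min (⊤ : ENNReal) n = n := fun n => min_eq_right le_top
    simp only [h1]
    rw [ENNReal.top_rpow_of_pos (by linarith), eq_top_iff, ← ENNReal.iSup_natCast]
    refine iSup_le fun n => le_iSup_of_le (n + 1) ?_
    calc (n : ENNReal) ≤ ((n+1:ℕ):ENNReal) ^ (1:ℝ) := by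
          rw [ENNReal.rpow_one]; exact_mod_cast Nat.le_succ n
    _ ≤ ((n+1:ℕ):ENNReal) ^ α :=
        ENNReal.rpow_le_rpow_of_exponent_le (by exact_mod_cast Nat.succ_le_succ n.zero_le) hα
  · obtain ⟨n, hn⟩ := ENNReal.exists_nat_gt ha
    apply le_antisymm
    · exact iSup_le fun m => ENNReal.rpow_le_rpow (min_le_left _ _) (by linarith)
    · exact le_iSup_of_le n (by rw [min_eq_left hn.le])

lemma lintegral_rpow_rnDeriv_map_le {X Y : Type*} [MeasurableSpace X] [MeasurableSpace Y]
    (P Q : Measure X) [IsProbabilityMeasure P] [IsProbabilityMeasure Q]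
    (f : X → Y) (hf : Measurable f) {α : ℝ} (hα : 1 < α) (hPQ : P ≪ Q) :
    ∫⁻ y, (P.map f).rnDeriv (Q.map f) y ^ α ∂(Q.map f) ≤ ∫⁻ x, P.rnDeriv Q x ^ α ∂Q := by
  have hPf : IsProbabilityMeasure (P.map f) := Measure.isProbabilityMeasure_map hf.aemeasurable
  have hQf : IsProbabilityMeasure (Q.map f) := Measure.isProbabilityMeasure_map hf.aemeasurable
  set r := (P.map f).rnDeriv (Q.map f) with hr_def
  set h := P.rnDeriv Q with hh_def
  have hr : Measurable r := Measure.measurable_rnDeriv _ _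
  have hh : Measurable h := Measure.measurable_rnDeriv _ _
  have hPQf : P.map f ≪ Q.map f := hPQ.map hf
  set B := ∫⁻ x, h x ^ α ∂Q with hB_def
  have hα0 : (0:ℝ) < α := by linarith
  have hα1 : (0:ℝ) < α - 1 := by linarith
  have key : ∀ n : ℕ, ∫⁻ y, (min (r y) n) ^ α ∂(Q.map f) ≤ B := by
    intro n
    set A := ∫⁻ y, (min (r y) n) ^ α ∂(Q.map f) with hA_def
    have hAtop : A ≠ ⊤ := by
      have h1 : A ≤ ∫⁻ _, ((n:ENNReal))^α ∂(Q.map f) :=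
        lintegral_mono fun y => ENNReal.rpow_le_rpow (min_le_right _ _) hα0.le
      rw [lintegral_const, measure_univ, mul_one] at h1
      exact ne_top_of_le_ne_top (ENNReal.rpow_ne_top_of_nonneg hα0.le (ENNReal.natCast_ne_top n)) h1
    -- step 1
    have step1 : A ≤ ∫⁻ y, (min (r y) n) ^ (α - 1) * r y ∂(Q.map f) := by
      refine lintegral_mono fun y => ?_
      have e : α = (α - 1) + 1 := by ring
      have : (min (r y) n) ^ α = (min (r y) n) ^ (α - 1) * (min (r y) n) ^ (1:ℝ) := by
        conv_lhs => rw [e]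
        exact ENNReal.rpow_add_of_nonneg _ _ (by linarith) zero_le_one
      rw [this, ENNReal.rpow_one]
      exact mul_le_mul_right (min_le_left _ _) _
    -- step 2-4: rewrite as integral over Q
    have step2 : ∫⁻ y, (min (r y) n) ^ (α - 1) * r y ∂(Q.map f)
        = ∫⁻ x, (min (r (f x)) n) ^ (α - 1) * h x ∂Q := by
      have hm : Measurable fun y => (min (r y) n) ^ (α - 1) :=
        (hr.min measurable_const).pow_const _
      calc ∫⁻ y, (min (r y) n) ^ (α - 1) * r y ∂(Q.map f)
          = ∫⁻ y, (min (r y) n) ^ (α - 1) ∂((Q.map f).withDensity r) := by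
            rw [lintegral_withDensity_eq_lintegral_mul _ hr hm]
            simp_rw [Pi.mul_apply, mul_comm]
        _ = ∫⁻ y, (min (r y) n) ^ (α - 1) ∂(P.map f) := by
            rw [Measure.withDensity_rnDeriv_eq _ _ hPQf]
        _ = ∫⁻ x, (min (r (f x)) n) ^ (α - 1) ∂P := lintegral_map hm hf
        _ = ∫⁻ x, (min (r (f x)) n) ^ (α - 1) ∂(Q.withDensity h) := by
            rw [Measure.withDensity_rnDeriv_eq _ _ hPQ]
        _ = ∫⁻ x, (min (r (f x)) n) ^ (α - 1) * h x ∂Q := by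
            have hm2 : Measurable fun x => (min (r (f x)) n) ^ (α - 1) :=
              ((hr.comp hf).min measurable_const).pow_const _
            rw [lintegral_withDensity_eq_lintegral_mul _ hh hm2]
            simp_rw [Pi.mul_apply, mul_comm]
    -- Hölder
    have hpq : (α / (α - 1)).HolderConjugate α := (Real.HolderConjugate.conjExponent hα).symm
    have hFA : ∫⁻ x, ((min (r (f x)) n) ^ (α-1)) ^ (α / (α - 1)) ∂Q = A := by
      have hexp : (α - 1) * (α / (α - 1)) = α := by field_simp
      simp_rw [← ENNReal.rpow_mul, hexp]
      rw [hA_def, lintegral_map ((hr.min measurable_const).pow_const _) hf]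
    have holder : A ≤ A ^ ((α-1)/α) * B ^ (1/α) := by
      have := ENNReal.lintegral_mul_le_Lp_mul_Lq Q hpq
        (f := fun x => (min (r (f x)) n) ^ (α-1)) (g := h)
        (((hr.min measurable_const).comp hf).pow_const _).aemeasurable hh.aemeasurable
      simp only [Pi.mul_apply] at this
      rw [hFA] at this
      have h1p : 1 / (α / (α - 1)) = (α - 1) / α := by field_simp
      rw [h1p] at this
      exact (step1.trans_eq step2).trans this
    -- conclude A ≤ B
    by_cases hA0 : A = 0
    · simp [hA0]
    have hsplit : A = A ^ ((α-1)/α) * A ^ (1/α) := by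
      rw [← ENNReal.rpow_add _ _ hA0 hAtop]
      have : (α - 1)/α + 1/α = 1 := by field_simp; ring
      rw [this, ENNReal.rpow_one]
    have hc0 : A ^ ((α-1)/α) ≠ 0 := by
      simp [ENNReal.rpow_eq_zero_iff, hA0, hAtop, ne_of_gt (div_pos hα1 hα0)]
    have hctop : A ^ ((α-1)/α) ≠ ⊤ :=
      ENNReal.rpow_ne_top_of_nonneg (by positivity) hAtop
    have hle : A ^ (1/α) ≤ B ^ (1/α) := by
      nth_rewrite 1 [hsplit] at holder
      exact (ENNReal.mul_le_mul_iff_right hc0 hctop).mp holder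
    calc A = (A ^ (1/α)) ^ α := by
          rw [← ENNReal.rpow_mul, one_div, inv_mul_cancel₀ (ne_of_gt hα0), ENNReal.rpow_one]
      _ ≤ (B ^ (1/α)) ^ α := ENNReal.rpow_le_rpow hle hα0.le
      _ = B := by
          rw [← ENNReal.rpow_mul, one_div, inv_mul_cancel₀ (ne_of_gt hα0), ENNReal.rpow_one]
  -- monotone convergence
  calc ∫⁻ y, r y ^ α ∂(Q.map f)
      = ∫⁻ y, ⨆ n : ℕ, (min (r y) n) ^ α ∂(Q.map f) := by
        simp_rw [sup_min_rpow _ hα.le]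
    _ = ⨆ n : ℕ, ∫⁻ y, (min (r y) n) ^ α ∂(Q.map f) := by
        refine lintegral_iSup (fun n => (hr.min measurable_const).pow_const _) ?_
        intro n m hnm y
        exact ENNReal.rpow_le_rpow (min_le_min le_rfl (Nat.cast_le.mpr hnm)) hα0.le
    _ ≤ B := iSup_le key

/-- **Data-processing inequality for Rényi divergence.**
For probability measures `P, Q` on `X`, a measurable map `f : X → Y`, and `α > 1`,
`D_α(f_*P ‖ f_*Q) ≤ D_α(P ‖ Q)`: post-processing preserves the privacy guarantee. -/
theorem renyiDiv_map_le {X Y : Type*} [MeasurableSpace X] [MeasurableSpace Y]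
    (P Q : Measure X) [IsProbabilityMeasure P] [IsProbabilityMeasure Q]
    (f : X → Y) (hf : Measurable f) (α : ℝ) (hα : 1 < α) :
    renyiDiv α (P.map f) (Q.map f) ≤ renyiDiv α P Q := by
  by_cases hPQ : P ≪ Q
  · rw [renyiDiv, renyiDiv, if_pos (hPQ.map hf), if_pos hPQ]
    refine mul_le_mul_of_nonneg_left ?_ ?_
    · exact ENNReal.log_monotone
        (lintegral_rpow_rnDeriv_map_le P Q f hf hα hPQ)
    · exact EReal.coe_nonneg.mpr (inv_nonneg.mpr (by linarith))
  · have : renyiDiv α P Q = ⊤ := by rw [renyiDiv, if_neg hPQ]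
    rw [this]; exact le_top
end

section
/- Let ε ∈ (0,1), δ ∈ (0,1), Δ > 0, and let μ, μ' ∈ ℝ satisfy |μ − μ'| ≤ Δ. If τ ≥ (Δ/ε)·√(2 log(1.25/δ)), then for every measurable set S ⊆ ℝ, N(μ, τ²)(S) ≤ e^ε · N(μ', τ²)(S) + δ. (The Gaussian mechanism with noise standard deviation τ ≥ (Δ/ε)√(2 log(1.25/δ)) applied to a function of sensitivity Δ satisfies (ε, δ)-differential privacy.) -/
open MeasureTheory ProbabilityTheory Real Set

open scoped ENNReal NNReal

lemma gauss_neg_map : (gaussianReal 0 1).map (fun x => (-1 : ℝ) * x) = gaussianReal 0 1 := by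
  rw [show (fun x => (-1:ℝ) * x) = ((-1 : ℝ) * ·) from rfl, gaussianReal_map_const_mul]
  have h1 : (NNReal.mk ((-1:ℝ)^2) (sq_nonneg _)) * 1 = 1 := by
    ext; norm_num
  rw [h1]
  norm_num

lemma gauss_Ioi_zero : gaussianReal 0 1 (Ioi (0:ℝ)) = 2⁻¹ := by
  have hsing : gaussianReal 0 1 ({0} : Set ℝ) = 0 :=
    gaussianReal_absolutelyContinuous 0 one_ne_zero Real.volume_singleton
  have hIio : gaussianReal 0 1 (Iio (0:ℝ)) = gaussianReal 0 1 (Ioi (0:ℝ)) := by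
    conv_lhs => rw [← gauss_neg_map]
    rw [Measure.map_apply (by fun_prop) measurableSet_Iio]
    congr 1
    ext x
    simp
  have hIci : gaussianReal 0 1 (Ici (0:ℝ)) = gaussianReal 0 1 (Ioi (0:ℝ)) := by
    refine le_antisymm ?_ (measure_mono Ioi_subset_Ici_self)
    rw [show Ici (0:ℝ) = {0} ∪ Ioi 0 by ext x; simp [le_iff_lt_or_eq, or_comm, eq_comm]]
    calc gaussianReal 0 1 (({0} : Set ℝ) ∪ Ioi 0)
        ≤ gaussianReal 0 1 ({0} : Set ℝ) + gaussianReal 0 1 (Ioi (0:ℝ)) := measure_union_le _ _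
      _ = gaussianReal 0 1 (Ioi (0:ℝ)) := by rw [hsing, zero_add]
  have htot : gaussianReal 0 1 (Iio (0:ℝ)) + gaussianReal 0 1 (Ici (0:ℝ)) = 1 := by
    rw [← measure_union (by simp [disjoint_left]) measurableSet_Ici, Iio_union_Ici,
      measure_univ]
  rw [hIio, hIci] at htot
  have h2 : (2 : ℝ≥0∞) * gaussianReal 0 1 (Ioi (0:ℝ)) = 2 * 2⁻¹ := by
    rw [two_mul, htot, ENNReal.mul_inv_cancel two_ne_zero ENNReal.ofNat_ne_top]
  exact (ENNReal.mul_right_inj two_ne_zero ENNReal.ofNat_ne_top).mp h2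

lemma gauss_shift (s : ℝ) : gaussianReal s 1 (Ioi s) = 2⁻¹ := by
  have h := gaussianReal_map_add_const (μ := 0) (v := 1) s
  rw [zero_add] at h
  rw [← h, Measure.map_apply (by fun_prop) measurableSet_Ioi]
  rw [show (· + s) ⁻¹' Ioi s = Ioi (0:ℝ) by ext x; simp]
  exact gauss_Ioi_zero

lemma gauss_tail_pos {s : ℝ} (hs : 0 ≤ s) :
    gaussianReal 0 1 (Ioi s) ≤ ENNReal.ofReal (rexp (-s^2/2)) * 2⁻¹ := by
  rw [gaussianReal_apply _ one_ne_zero]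
  have hmono : ∀ x ∈ Ioi s,
      gaussianPDF 0 1 x ≤ ENNReal.ofReal (rexp (-s^2/2)) * gaussianPDF s 1 x := by
    intro x hx
    rw [gaussianPDF, gaussianPDF, ← ENNReal.ofReal_mul (exp_nonneg _)]
    refine ENNReal.ofReal_le_ofReal ?_
    rw [gaussianPDFReal, gaussianPDFReal]
    have hx' : s ≤ x := le_of_lt hx
    push_cast
    have key : rexp (-(x - 0)^2/(2*1)) ≤ rexp (-(x - s)^2/(2*1)) * rexp (-s^2/2) := by
      rw [← Real.exp_add, Real.exp_le_exp]
      nlinarith [mul_nonneg hs (sub_nonneg.mpr hx')]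
    calc (√(2 * π * 1))⁻¹ * rexp (-(x - 0)^2/(2*1))
        ≤ (√(2 * π * 1))⁻¹ * (rexp (-(x - s)^2/(2*1)) * rexp (-s^2/2)) :=
          mul_le_mul_of_nonneg_left key (by positivity)
      _ = rexp (-s^2/2) * ((√(2 * π * 1))⁻¹ * rexp (-(x - s)^2/(2*1))) := by ring
  calc ∫⁻ x in Ioi s, gaussianPDF 0 1 x
      ≤ ∫⁻ x in Ioi s, ENNReal.ofReal (rexp (-s^2/2)) * gaussianPDF s 1 x :=
        setLIntegral_mono (measurable_const.mul (measurable_gaussianPDF s 1)) hmono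
    _ = ENNReal.ofReal (rexp (-s^2/2)) * ∫⁻ x in Ioi s, gaussianPDF s 1 x :=
        lintegral_const_mul _ (measurable_gaussianPDF s 1)
    _ = ENNReal.ofReal (rexp (-s^2/2)) * 2⁻¹ := by
        rw [← gaussianReal_apply _ one_ne_zero, gauss_shift]

lemma gauss_tail_neg : gaussianReal 0 1 (Ioi (-(1/2) : ℝ)) ≤ ENNReal.ofReal 0.7 := by
  have hsplit : Ioi (-(1/2):ℝ) = Ioc (-(1/2):ℝ) 0 ∪ Ioi (0:ℝ) := by
    rw [Ioc_union_Ioi_eq_Ioi]; norm_num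
  have hIoc : gaussianReal 0 1 (Ioc (-(1/2):ℝ) 0) ≤ ENNReal.ofReal (1/5 : ℝ) := by
    rw [gaussianReal_apply _ one_ne_zero]
    have hb : ∀ x ∈ Ioc (-(1/2):ℝ) 0, gaussianPDF 0 1 x ≤ ENNReal.ofReal ((2/5 : ℝ)) := by
      intro x _
      rw [gaussianPDF]
      refine ENNReal.ofReal_le_ofReal ?_
      rw [gaussianPDFReal]
      have h1 : rexp (-(x - 0)^2 / (2 * (1:ℝ≥0))) ≤ 1 := by
        rw [Real.exp_le_one_iff]
        push_cast
        have : (0:ℝ) ≤ (x - 0)^2 / 2 := by positivity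
        linarith
      have h2 : (√(2 * π * (1:ℝ≥0)))⁻¹ ≤ 2/5 := by
        push_cast
        rw [mul_one]
        have hpi : (5/2 : ℝ) ≤ √(2 * π) := by
          rw [show (5/2 : ℝ) = √((5/2)^2) by rw [Real.sqrt_sq]; norm_num]
          refine Real.sqrt_le_sqrt ?_
          nlinarith [Real.pi_gt_d6]
        rw [inv_le_comm₀ (by positivity) (by norm_num)]
        linarith
      calc (√(2 * π * (1:ℝ≥0)))⁻¹ * rexp (-(x - 0)^2 / (2 * (1:ℝ≥0)))
          ≤ (2/5) * 1 := mul_le_mul h2 h1 (exp_nonneg _) (by norm_num)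
        _ = 2/5 := by ring
    calc ∫⁻ x in Ioc (-(1/2):ℝ) 0, gaussianPDF 0 1 x
        ≤ ∫⁻ _ in Ioc (-(1/2):ℝ) 0, ENNReal.ofReal ((2/5 : ℝ)) :=
          setLIntegral_mono measurable_const hb
      _ = ENNReal.ofReal ((2/5:ℝ)) * volume (Ioc (-(1/2):ℝ) 0) := by
          rw [setLIntegral_const, mul_comm]
      _ = ENNReal.ofReal ((2/5:ℝ)) * ENNReal.ofReal (1/2 : ℝ) := by
          rw [Real.volume_Ioc]; norm_num
      _ = ENNReal.ofReal (1/5 : ℝ) := by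
          rw [← ENNReal.ofReal_mul (by norm_num)]; norm_num
  calc gaussianReal 0 1 (Ioi (-(1/2):ℝ))
      ≤ gaussianReal 0 1 (Ioc (-(1/2):ℝ) 0) + gaussianReal 0 1 (Ioi (0:ℝ)) := by
        rw [hsplit]; exact measure_union_le _ _
    _ ≤ ENNReal.ofReal (1/5:ℝ) + 2⁻¹ := by
        rw [gauss_Ioi_zero]; exact add_le_add_left hIoc _
    _ = ENNReal.ofReal 0.7 := by
        rw [show (2⁻¹ : ℝ≥0∞) = ENNReal.ofReal (1/2:ℝ) by
          rw [ENNReal.ofReal_div_of_pos] <;> norm_num,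
          ← ENNReal.ofReal_add (by norm_num) (by norm_num)]
        norm_num

lemma gauss_tail_dp (δ : ℝ) (hδ : 0 < δ) (hδ1 : δ < 1) (s : ℝ)
    (hs : Real.sqrt (2 * Real.log (1.25/δ)) - (2 * Real.sqrt (2 * Real.log (1.25/δ)))⁻¹ ≤ s) :
    gaussianReal 0 1 (Ioi s) ≤ ENNReal.ofReal δ := by
  set L : ℝ := Real.log (1.25/δ) with hLdef
  set c : ℝ := Real.sqrt (2 * L) with hcdef
  have hL5 : (1/5 : ℝ) ≤ L := by
    have h1 : Real.log 1.25 ≤ L := by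
      refine Real.log_le_log (by norm_num) ?_
      rw [le_div_iff₀ hδ]
      nlinarith
    have h2 : (1/5 : ℝ) ≤ Real.log 1.25 := by
      have := Real.log_le_sub_one_of_pos (show (0:ℝ) < 0.8 by norm_num)
      have hinv : Real.log 0.8 = - Real.log 1.25 := by
        rw [show (0.8 : ℝ) = 1.25⁻¹ by norm_num, Real.log_inv]
      linarith
    linarith
  have hc2 : c^2 = 2 * L := Real.sq_sqrt (by linarith)
  have hc : 0 < c := Real.sqrt_pos.mpr (by linarith)
  have hq : (2*c) * (2*c)⁻¹ = 1 := mul_inv_cancel₀ (by positivity)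
  have hδeq : δ = 1.25 * rexp (-L) := by
    have h := Real.exp_log (show (0:ℝ) < 1.25/δ by positivity)
    rw [← hLdef] at h
    rw [Real.exp_neg]
    field_simp [h]
    rw [h]; field_simp
  by_cases hL : (1/4 : ℝ) ≤ L
  · -- case A
    have hs0 : 0 ≤ c - (2*c)⁻¹ := by nlinarith
    have hspos : 0 ≤ s := le_trans hs0 hs
    refine le_trans (gauss_tail_pos hspos) ?_
    rw [show ((2:ℝ≥0∞))⁻¹ = ENNReal.ofReal (1/2 : ℝ) by
        rw [ENNReal.ofReal_div_of_pos] <;> norm_num,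
      ← ENNReal.ofReal_mul (exp_nonneg _)]
    refine ENNReal.ofReal_le_ofReal ?_
    have hsq : 2*L - 1 ≤ s^2 := by nlinarith [mul_le_mul hs hs hs0 (le_trans hs0 hs), sq_nonneg ((2*c)⁻¹)]
    have hmono : rexp (-s^2/2) ≤ rexp (1/2) * rexp (-L) := by
      rw [← Real.exp_add, Real.exp_le_exp]
      linarith
    have hexph : rexp (1/2) * rexp (1/2) = rexp 1 := by
      rw [← Real.exp_add]; norm_num
    have he1 : rexp 1 < 2.7182818286 := Real.exp_one_lt_d9
    have hehalf : rexp (1/2) ≤ 2.5 := by nlinarith [Real.exp_pos (1/2 : ℝ)]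
    have hepos : (0:ℝ) < rexp (-L) := Real.exp_pos _
    nlinarith
  · -- case B
    push_neg at hL
    have hchalf : (1/2 : ℝ) ≤ c := by nlinarith
    have hsge : -(1/2 : ℝ) ≤ s := by nlinarith
    refine le_trans (measure_mono (Ioi_subset_Ioi hsge)) ?_
    refine le_trans gauss_tail_neg (ENNReal.ofReal_le_ofReal ?_)
    have h14 : rexp (-(1/4) : ℝ) ≤ rexp (-L) := by
      rw [Real.exp_le_exp]; linarith
    have h34 : (3/4 : ℝ) ≤ rexp (-(1/4) : ℝ) := by
      have := Real.add_one_le_exp (-(1/4) : ℝ)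
      linarith
    nlinarith

set_option maxHeartbeats 2000000 in
/-- **The classical Gaussian mechanism.**
For `ε, δ ∈ (0,1)`, sensitivity `|μ − μ'| ≤ Δ`, and noise standard deviation
`τ ≥ (Δ/ε)√(2 log(1.25/δ))`, the Gaussian mechanism satisfies `(ε, δ)`-DP:
`N(μ, τ²)(S) ≤ e^ε · N(μ', τ²)(S) + δ` for every measurable `S`. -/
theorem gaussian_mechanism_dp (ε δ Δ τ μ μ' : ℝ)
    (hε : 0 < ε) (hε1 : ε < 1) (hδ : 0 < δ) (hδ1 : δ < 1) (hΔ : 0 < Δ)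
    (hsens : |μ - μ'| ≤ Δ)
    (hτ : Δ / ε * Real.sqrt (2 * Real.log (1.25 / δ)) ≤ τ) :
    ∀ S : Set ℝ, MeasurableSet S →
      gaussianReal μ (τ ^ 2).toNNReal S
        ≤ ENNReal.ofReal (Real.exp ε) * gaussianReal μ' (τ ^ 2).toNNReal S
          + ENNReal.ofReal δ := by
  intro S hS
  set c : ℝ := Real.sqrt (2 * Real.log (1.25/δ)) with hcdef
  have hlogpos : 0 < Real.log (1.25/δ) :=
    Real.log_pos (by rw [lt_div_iff₀ hδ]; nlinarith)
  have hc : 0 < c := Real.sqrt_pos.mpr (by linarith)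
  have hτpos : 0 < τ := lt_of_lt_of_le (by positivity) hτ
  set v : ℝ≥0 := (τ^2).toNNReal with hvdef
  have hvco : (v : ℝ) = τ^2 := Real.coe_toNNReal _ (sq_nonneg τ)
  have hvne : v ≠ 0 := by
    refine ne_of_gt ?_
    rw [hvdef]
    exact Real.toNNReal_pos.mpr (by positivity)
  set a : ℝ := μ - μ' with hadef
  set r : ℝ := ε * τ^2 - a^2/2 with hrdef
  set A : Set ℝ := {x | a * (x - μ) ≤ r} with hAdef
  have hAmeas : MeasurableSet A := measurableSet_le (by fun_prop) measurable_const
  -- pointwise density bound on A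
  have hpdf : ∀ x ∈ A, gaussianPDFReal μ v x ≤ rexp ε * gaussianPDFReal μ' v x := by
    intro x hx
    have hx' : a * (x - μ) ≤ r := hx
    rw [gaussianPDFReal, gaussianPDFReal]
    have key : rexp (-(x-μ)^2/(2*(v:ℝ))) ≤ rexp ε * rexp (-(x-μ')^2/(2*(v:ℝ))) := by
      rw [← Real.exp_add, Real.exp_le_exp, hvco]
      have h2 : (0:ℝ) < 2*τ^2 := by positivity
      rw [show ε + -(x-μ')^2/(2*τ^2) = (ε*(2*τ^2) + -(x-μ')^2)/(2*τ^2) by field_simp,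
        div_le_div_iff_of_pos_right h2]
      have idq : (x-μ')^2 - (x-μ)^2 = 2*(μ-μ')*(x-μ) + (μ-μ')^2 := by ring
      rw [hrdef, hadef] at hx'
      nlinarith [hx', idq]
    calc (√(2*π*(v:ℝ)))⁻¹ * rexp (-(x-μ)^2/(2*(v:ℝ)))
        ≤ (√(2*π*(v:ℝ)))⁻¹ * (rexp ε * rexp (-(x-μ')^2/(2*(v:ℝ)))) :=
          mul_le_mul_of_nonneg_left key (by positivity)
      _ = rexp ε * ((√(2*π*(v:ℝ)))⁻¹ * rexp (-(x-μ')^2/(2*(v:ℝ)))) := by ring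
  -- bound on S ∩ A
  have hPA : gaussianReal μ v (S ∩ A) ≤ ENNReal.ofReal (rexp ε) * gaussianReal μ' v S := by
    rw [gaussianReal_apply _ hvne, gaussianReal_apply _ hvne]
    calc ∫⁻ x in S ∩ A, gaussianPDF μ v x
        ≤ ∫⁻ x in S ∩ A, ENNReal.ofReal (rexp ε) * gaussianPDF μ' v x := by
          refine setLIntegral_mono (measurable_const.mul (measurable_gaussianPDF _ _)) ?_
          intro x hx
          rw [gaussianPDF, gaussianPDF, ← ENNReal.ofReal_mul (exp_nonneg _)]
          exact ENNReal.ofReal_le_ofReal (hpdf x hx.2)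
      _ = ENNReal.ofReal (rexp ε) * ∫⁻ x in S ∩ A, gaussianPDF μ' v x :=
          lintegral_const_mul _ (measurable_gaussianPDF _ _)
      _ ≤ ENNReal.ofReal (rexp ε) * ∫⁻ x in S, gaussianPDF μ' v x := by
          refine mul_le_mul_right ?_ _
          rw [← gaussianReal_apply _ hvne, ← gaussianReal_apply _ hvne]
          exact measure_mono inter_subset_left
  -- bound on the bad set
  have hPAc : gaussianReal μ v Aᶜ ≤ ENNReal.ofReal δ := by
    by_cases ha : a = 0
    · have : Aᶜ = (∅ : Set ℝ) := by
        ext x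
        simp only [hAdef, mem_compl_iff, mem_setOf_eq, not_le, mem_empty_iff_false, iff_false,
          not_lt, ha]
        rw [hrdef, ha]
        nlinarith
      rw [this]
      simp
    · set b : ℝ := |a| with hbdef
      have hb : 0 < b := abs_pos.mpr ha
      have hbΔ : b ≤ Δ := hsens
      have hAc : Aᶜ = (fun x => a*x) ⁻¹' (Ioi (a*μ + r)) := by
        ext x
        simp only [hAdef, mem_compl_iff, mem_setOf_eq, not_le, mem_preimage, mem_Ioi]
        constructor <;> intro h <;> nlinarith
      rw [hAc, ← Measure.map_apply ((by fun_prop : Measurable fun x : ℝ => a * x)) measurableSet_Ioi,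
        show (fun x : ℝ => a*x) = (a * ·) from rfl, gaussianReal_map_const_mul]
      have hwne : (NNReal.mk (a^2) (sq_nonneg a)) * v ≠ 0 := by
        refine mul_ne_zero ?_ hvne
        intro hcon
        have := congrArg NNReal.toReal hcon
        simp only [NNReal.coe_zero, NNReal.coe_mk] at this
        exact ha (by nlinarith [sq_abs a, abs_pos.mpr (show a ≠ 0 from ha)])
      have hsh := gaussianReal_map_add_const (μ := 0) (v := (NNReal.mk (a^2) (sq_nonneg a)) * v) (a*μ)
      rw [zero_add] at hsh
      rw [← hsh, Measure.map_apply (by fun_prop) measurableSet_Ioi,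
        show (· + a*μ) ⁻¹' (Ioi (a*μ + r)) = Ioi r by ext x; simp [add_comm]]
      have hsc := gaussianReal_map_const_mul (μ := 0) (v := 1) (b*τ)
      rw [mul_zero, show (NNReal.mk ((b*τ)^2) (sq_nonneg (b*τ))) * 1 = (NNReal.mk (a^2) (sq_nonneg a)) * v by
        ext
        push_cast
        rw [hvco, hbdef, mul_pow, sq_abs]
        ring] at hsc
      rw [← hsc, Measure.map_apply (by fun_prop) measurableSet_Ioi,
        show ((b*τ) * ·) ⁻¹' (Ioi r) = Ioi (r/(b*τ)) by
          ext x
          simp only [mem_preimage, mem_Ioi]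
          rw [div_lt_iff₀ (by positivity), mul_comm]]
      refine gauss_tail_dp δ hδ hδ1 _ ?_
      -- numeric bound on the threshold
      have hτΔ : Δ * c ≤ ε * τ := by
        have h1 : Δ / ε * c * ε ≤ τ * ε := mul_le_mul_of_nonneg_right hτ (le_of_lt hε)
        have h2 : Δ / ε * c * ε = Δ * c := by field_simp
        linarith [h1, h2]
      have hbc : b * c ≤ Δ * c := mul_le_mul_of_nonneg_right hbΔ hc.le
      have h1 : c ≤ ε*τ/b := by
        rw [le_div_iff₀ hb]
        linarith [mul_comm c b, mul_comm b c]
      have h2 : b/(2*τ) ≤ (2*c)⁻¹ := by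
        rw [show ((2*c)⁻¹ : ℝ) = 1/(2*c) by rw [one_div],
          div_le_div_iff₀ (by positivity) (by positivity)]
        have hετ : ε * τ ≤ τ := by nlinarith
        linarith
      have heq : r/(b*τ) = ε*τ/b - b/(2*τ) := by
        rw [hrdef, show a^2 = b^2 by rw [hbdef, sq_abs]]
        field_simp
      rw [heq]
      rw [← hcdef]
      linarith
  calc gaussianReal μ v S
      ≤ gaussianReal μ v (S ∩ A) + gaussianReal μ v (S \ A) :=
        measure_le_inter_add_diff _ _ _
    _ ≤ ENNReal.ofReal (rexp ε) * gaussianReal μ' v S + ENNReal.ofReal δ := by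
        refine add_le_add hPA (le_trans (measure_mono ?_) hPAc)
        exact fun x hx => hx.2
end

section
/- Let l ≥ 1, c > 0, σ_x > 0, σ_y > 0, d_x ≥ 1, K ≥ 1, and α > 1. Let (x_1, y_1),…,(x_l, y_l) and (x'_1, y'_1),…,(x'_l, y'_l) be two l-tuples of labeled points, where each x_i, x'_i ∈ ℝ^{d_x} satisfies ‖x_i‖₂ ≤ c and ‖x'_i‖₂ ≤ c, each y_i, y'_i ∈ ℝ^K is a standard basis (one-hot) vector, and the two tuples agree at all indices except exactly one. Let P be the product measure on ℝ^{d_x} × ℝ^K whose first factor is the product Gaussian ⊗_{j=1}^{d_x} N(((1/l)∑_i x_i)_j, σ_x²) and whose second factor is ⊗_{j=1}^{K} N(((1/l)∑_i y_i)_j, σ_y²), and let P' be defined analogously from the primed tuple. Then D_α(P ‖ P') ≤ (α/l²)·(2c²/σ_x² + 1/σ_y²). (Generation of one synthetic DP-CDA sample from a fixed l-subset is (α, ε(α))-RDP with ε(α) = (α/l²)(2c²/σ_x² + 1/σ_y²).) -/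
open MeasureTheory ProbabilityTheory Real
open scoped Classical

open scoped ENNReal NNReal

lemma lintegral_pi_prod' {n : ℕ} (μ : Fin n → Measure ℝ) [∀ i, SigmaFinite (μ i)]
    (f : Fin n → ℝ → ℝ≥0∞) (hf : ∀ i, Measurable (f i)) :
    ∫⁻ u, ∏ i, f i (u i) ∂Measure.pi μ = ∏ i, ∫⁻ t, f i t ∂μ i := by
  induction n with
  | zero => simp [Measure.pi_of_empty]
  | succ n ih =>
    have hmp := (measurePreserving_piFinSuccAbove μ 0).symm
    have hint : Measurable fun u : Fin (n+1) → ℝ => ∏ i, f i (u i) :=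
      Finset.measurable_prod _ fun i _ => (hf i).comp (measurable_pi_apply i)
    rw [← hmp.lintegral_comp hint]
    have heq : ∀ p : ℝ × (Fin n → ℝ),
        (∏ i, f i ((MeasurableEquiv.piFinSuccAbove (fun _ => ℝ) 0).symm p i))
          = f 0 p.1 * ∏ i : Fin n, f i.succ (p.2 i) := by
      intro p
      simp only [MeasurableEquiv.piFinSuccAbove_symm_apply, Fin.insertNthEquiv,
        Fin.insertNth_zero, Equiv.coe_fn_mk]
      rw [Fin.prod_univ_succ]
      simp [Fin.cons_zero, Fin.cons_succ]
    simp_rw [heq]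
    have h2 : ∫⁻ a : ℝ × (Fin n → ℝ), f 0 a.1 * ∏ i : Fin n, f i.succ (a.2 i)
          ∂((μ 0).prod (Measure.pi fun j => μ (Fin.succAbove 0 j)))
        = (∫⁻ t, f 0 t ∂μ 0) * ∫⁻ u, ∏ i : Fin n, f i.succ (u i)
            ∂(Measure.pi fun j => μ (Fin.succAbove 0 j)) :=
      lintegral_prod_mul (hf 0).aemeasurable
        (Finset.measurable_prod _ fun i _ => (hf (Fin.succ i)).comp (measurable_pi_apply i) :
          Measurable fun u : Fin n → ℝ => ∏ i : Fin n, f i.succ (u i)).aemeasurable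
    rw [h2]
    have h3 : (Measure.pi fun j : Fin n => μ (Fin.succAbove 0 j))
        = Measure.pi fun j : Fin n => μ j.succ := by
      simp [Fin.zero_succAbove]
    rw [h3, ih _ _ fun i => hf i.succ, Fin.prod_univ_succ]

lemma pi_gaussian_eq' {n : ℕ} (m : Fin n → ℝ) {v : ℝ≥0} (hv : v ≠ 0) :
    Measure.pi (fun i => gaussianReal (m i) v)
      = (Measure.pi fun _ : Fin n => (volume : Measure ℝ)).withDensity
          (fun u => ∏ i, gaussianPDF (m i) v (u i)) := by
  refine Measure.pi_eq fun s hs => ?_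
  rw [withDensity_apply _ (MeasurableSet.univ_pi hs),
    ← lintegral_indicator (MeasurableSet.univ_pi hs) (fun u => ∏ i, gaussianPDF (m i) v (u i))]
  have hind : ∀ u : Fin n → ℝ,
      (Set.univ.pi s).indicator (fun u => ∏ i, gaussianPDF (m i) v (u i)) u
        = ∏ i, (s i).indicator (gaussianPDF (m i) v) (u i) := by
    intro u
    by_cases h : u ∈ Set.univ.pi s
    · rw [Set.indicator_of_mem h]
      refine Finset.prod_congr rfl fun i _ => ?_
      rw [Set.indicator_of_mem (h i (Set.mem_univ i))]
    · rw [Set.indicator_of_notMem h]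
      have h' : ¬ ∀ i, u i ∈ s i := by simpa [Set.mem_pi] using h
      obtain ⟨i, hi⟩ := not_forall.mp h'
      exact (Finset.prod_eq_zero (Finset.mem_univ i)
        (by rw [Set.indicator_of_notMem hi])).symm
  simp_rw [hind]
  rw [lintegral_pi_prod' _ _ fun i => (measurable_gaussianPDF (m i) v).indicator (hs i)]
  refine Finset.prod_congr rfl fun i _ => ?_
  rw [lintegral_indicator (hs i), gaussianReal_apply _ hv]

lemma prod_withDensity_eq' {X Y : Type*} [MeasurableSpace X] [MeasurableSpace Y]
    (μ : Measure X) (ν : Measure Y) [SigmaFinite μ] [SigmaFinite ν]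
    {f : X → ℝ≥0∞} {g : Y → ℝ≥0∞} (hf : Measurable f) (hg : Measurable g)
    [SigmaFinite (μ.withDensity f)] [SigmaFinite (ν.withDensity g)] :
    (μ.withDensity f).prod (ν.withDensity g)
      = (μ.prod ν).withDensity (fun z => f z.1 * g z.2) := by
  refine (Measure.prod_eq (μ := μ.withDensity f) (ν := ν.withDensity g)
    (μν := (μ.prod ν).withDensity fun z => f z.1 * g z.2) fun s t hs ht => ?_)
  rw [withDensity_apply _ (hs.prod ht),
    ← lintegral_indicator (hs.prod ht) (fun z : X × Y => f z.1 * g z.2)]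
  have hind : ∀ z : X × Y, (s ×ˢ t).indicator (fun z => f z.1 * g z.2) z
      = s.indicator f z.1 * t.indicator g z.2 := by
    intro z
    by_cases h : z ∈ s ×ˢ t
    · rw [Set.indicator_of_mem h, Set.indicator_of_mem h.1, Set.indicator_of_mem h.2]
    · rw [Set.indicator_of_notMem h]
      rcases not_and_or.mp (Set.mem_prod.not.mp h) with h1 | h1
      · rw [Set.indicator_of_notMem h1, zero_mul]
      · rw [Set.indicator_of_notMem h1, mul_zero]
  simp_rw [hind]
  rw [lintegral_prod_mul (hf.indicator hs).aemeasurable (hg.indicator ht).aemeasurable,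
    lintegral_indicator hs, lintegral_indicator ht,
    withDensity_apply _ hs, withDensity_apply _ ht]

lemma gauss_rpow_lintegral' (m m' : ℝ) {v : ℝ≥0} (hv : v ≠ 0) (α : ℝ) :
    ∫⁻ t, ENNReal.ofReal (gaussianPDFReal m v t ^ α * gaussianPDFReal m' v t ^ (1 - α)) ∂volume
      = ENNReal.ofReal (rexp (α * (α - 1) * (m - m') ^ 2 / (2 * v))) := by
  have hv0 : (0:ℝ) < v := lt_of_le_of_ne v.2 (by exact_mod_cast hv.symm)
  have hc0 : (0:ℝ) < (Real.sqrt (2 * π * v))⁻¹ := by positivity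
  have hpt : ∀ t : ℝ, gaussianPDFReal m v t ^ α * gaussianPDFReal m' v t ^ (1 - α)
      = gaussianPDFReal (α * m + (1 - α) * m') v t
        * rexp (α * (α - 1) * (m - m') ^ 2 / (2 * v)) := by
    intro t
    simp only [gaussianPDFReal]
    rw [Real.mul_rpow hc0.le (Real.exp_nonneg _), Real.mul_rpow hc0.le (Real.exp_nonneg _),
      ← Real.exp_mul, ← Real.exp_mul]
    have hcc : (Real.sqrt (2 * π * v))⁻¹ ^ α * (Real.sqrt (2 * π * v))⁻¹ ^ (1 - α)
        = (Real.sqrt (2 * π * v))⁻¹ := by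
      rw [← Real.rpow_add hc0]
      norm_num
    have hee : -(t - m) ^ 2 / (2 * v) * α + -(t - m') ^ 2 / (2 * v) * (1 - α)
        = -(t - (α * m + (1 - α) * m')) ^ 2 / (2 * v)
          + α * (α - 1) * (m - m') ^ 2 / (2 * v) := by
      field_simp
      ring
    calc (Real.sqrt (2 * π * v))⁻¹ ^ α * rexp (-(t - m) ^ 2 / (2 * ↑v) * α)
          * ((Real.sqrt (2 * π * v))⁻¹ ^ (1 - α) * rexp (-(t - m') ^ 2 / (2 * ↑v) * (1 - α)))
        = ((Real.sqrt (2 * π * v))⁻¹ ^ α * (Real.sqrt (2 * π * v))⁻¹ ^ (1 - α))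
          * rexp (-(t - m) ^ 2 / (2 * ↑v) * α + -(t - m') ^ 2 / (2 * ↑v) * (1 - α)) := by
          rw [Real.exp_add]; ring
      _ = (Real.sqrt (2 * π * v))⁻¹ * rexp (-(t - (α * m + (1 - α) * m')) ^ 2 / (2 * ↑v))
          * rexp (α * (α - 1) * (m - m') ^ 2 / (2 * ↑v)) := by
          rw [hcc, hee, Real.exp_add]; ring
  simp_rw [hpt, ENNReal.ofReal_mul (gaussianPDFReal_nonneg _ _ _)]
  have hgp : ∀ t, ENNReal.ofReal (gaussianPDFReal (α * m + (1 - α) * m') v t)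
      = gaussianPDF (α * m + (1 - α) * m') v t := fun t => rfl
  simp_rw [hgp]
  rw [lintegral_mul_const _ (measurable_gaussianPDF _ _), lintegral_gaussianPDF_eq_one _ hv,
    one_mul]

lemma pt_density' {a b : ℝ} (ha : 0 < a) (hb : 0 < b) (α : ℝ) :
    ENNReal.ofReal b * ((ENNReal.ofReal b)⁻¹ * ENNReal.ofReal a) ^ α
      = ENNReal.ofReal (a ^ α * b ^ (1 - α)) := by
  rw [← ENNReal.ofReal_inv_of_pos hb, ← ENNReal.ofReal_mul (inv_nonneg.mpr hb.le),
    ENNReal.ofReal_rpow_of_pos (by positivity), ← ENNReal.ofReal_mul hb.le]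
  congr 1
  rw [Real.mul_rpow (inv_nonneg.mpr hb.le) ha.le, Real.inv_rpow hb.le, ← Real.rpow_neg hb.le]
  have h1 : b ^ (1 - α) = b * b ^ (-α) := by
    rw [sub_eq_add_neg, Real.rpow_add hb, Real.rpow_one]
  rw [h1]; ring

lemma gaussian_prod_renyi_integral {dx K : ℕ} (mx mx' : Fin dx → ℝ) (my my' : Fin K → ℝ)
    {vx vy : ℝ≥0} (hvx : vx ≠ 0) (hvy : vy ≠ 0) (α : ℝ) :
    (((Measure.pi fun j => gaussianReal (mx j) vx).prod
        (Measure.pi fun k => gaussianReal (my k) vy)) ≪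
      ((Measure.pi fun j => gaussianReal (mx' j) vx).prod
        (Measure.pi fun k => gaussianReal (my' k) vy))) ∧
    ∫⁻ z, (((Measure.pi fun j => gaussianReal (mx j) vx).prod
        (Measure.pi fun k => gaussianReal (my k) vy)).rnDeriv
        ((Measure.pi fun j => gaussianReal (mx' j) vx).prod
          (Measure.pi fun k => gaussianReal (my' k) vy)) z) ^ α
      ∂((Measure.pi fun j => gaussianReal (mx' j) vx).prod
          (Measure.pi fun k => gaussianReal (my' k) vy))
      = ENNReal.ofReal (rexp (∑ j, α * (α - 1) * (mx j - mx' j) ^ 2 / (2 * vx)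
          + ∑ k, α * (α - 1) * (my k - my' k) ^ 2 / (2 * vy))) := by
  set Mx : Measure (Fin dx → ℝ) := Measure.pi fun _ => volume with hMx
  set My : Measure (Fin K → ℝ) := Measure.pi fun _ => volume with hMy
  set M : Measure ((Fin dx → ℝ) × (Fin K → ℝ)) := Mx.prod My with hM
  -- real densities
  set fx : (Fin dx → ℝ) → ℝ := fun u => ∏ j, gaussianPDFReal (mx j) vx (u j) with hfx
  set gx : (Fin dx → ℝ) → ℝ := fun u => ∏ j, gaussianPDFReal (mx' j) vx (u j) with hgx
  set fy : (Fin K → ℝ) → ℝ := fun w => ∏ k, gaussianPDFReal (my k) vy (w k) with hfy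
  set gy : (Fin K → ℝ) → ℝ := fun w => ∏ k, gaussianPDFReal (my' k) vy (w k) with hgy
  have hfxpos : ∀ u, 0 < fx u := fun u =>
    Finset.prod_pos fun j _ => gaussianPDFReal_pos _ _ _ hvx
  have hgxpos : ∀ u, 0 < gx u := fun u =>
    Finset.prod_pos fun j _ => gaussianPDFReal_pos _ _ _ hvx
  have hfypos : ∀ w, 0 < fy w := fun w =>
    Finset.prod_pos fun k _ => gaussianPDFReal_pos _ _ _ hvy
  have hgypos : ∀ w, 0 < gy w := fun w =>
    Finset.prod_pos fun k _ => gaussianPDFReal_pos _ _ _ hvy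
  -- ENNReal densities
  set F : (Fin dx → ℝ) × (Fin K → ℝ) → ℝ≥0∞ := fun z => ENNReal.ofReal (fx z.1 * fy z.2)
    with hF
  set G : (Fin dx → ℝ) × (Fin K → ℝ) → ℝ≥0∞ := fun z => ENNReal.ofReal (gx z.1 * gy z.2)
    with hG
  have hfxm : Measurable fx := Finset.measurable_prod _ fun j _ =>
    (measurable_gaussianPDFReal _ _).comp (measurable_pi_apply j)
  have hgxm : Measurable gx := Finset.measurable_prod _ fun j _ =>
    (measurable_gaussianPDFReal _ _).comp (measurable_pi_apply j)
  have hfym : Measurable fy := Finset.measurable_prod _ fun k _ =>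
    (measurable_gaussianPDFReal _ _).comp (measurable_pi_apply k)
  have hgym : Measurable gy := Finset.measurable_prod _ fun k _ =>
    (measurable_gaussianPDFReal _ _).comp (measurable_pi_apply k)
  have hFm : Measurable F :=
    ((hfxm.comp measurable_fst).mul (hfym.comp measurable_snd)).ennreal_ofReal
  have hGm : Measurable G :=
    ((hgxm.comp measurable_fst).mul (hgym.comp measurable_snd)).ennreal_ofReal
  -- express the two product measures as withDensity
  have hprodX : ∀ u : Fin dx → ℝ, (∏ j, gaussianPDF (mx j) vx (u j))
      = ENNReal.ofReal (fx u) :=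
    fun u => (ENNReal.ofReal_prod_of_nonneg fun j _ => gaussianPDFReal_nonneg _ _ _).symm
  have hprodX' : ∀ u : Fin dx → ℝ, (∏ j, gaussianPDF (mx' j) vx (u j))
      = ENNReal.ofReal (gx u) :=
    fun u => (ENNReal.ofReal_prod_of_nonneg fun j _ => gaussianPDFReal_nonneg _ _ _).symm
  have hprodY : ∀ w : Fin K → ℝ, (∏ k, gaussianPDF (my k) vy (w k))
      = ENNReal.ofReal (fy w) :=
    fun w => (ENNReal.ofReal_prod_of_nonneg fun k _ => gaussianPDFReal_nonneg _ _ _).symm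
  have hprodY' : ∀ w : Fin K → ℝ, (∏ k, gaussianPDF (my' k) vy (w k))
      = ENNReal.ofReal (gy w) :=
    fun w => (ENNReal.ofReal_prod_of_nonneg fun k _ => gaussianPDFReal_nonneg _ _ _).symm
  haveI : SigmaFinite (Mx.withDensity fun u => ENNReal.ofReal (fx u)) := by
    have : (Mx.withDensity fun u => ENNReal.ofReal (fx u))
        = Measure.pi fun j => gaussianReal (mx j) vx := by
      rw [pi_gaussian_eq' mx hvx]; congr 1; ext u; rw [hprodX u]
    rw [this]; infer_instance
  haveI : SigmaFinite (My.withDensity fun w => ENNReal.ofReal (fy w)) := by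
    have : (My.withDensity fun w => ENNReal.ofReal (fy w))
        = Measure.pi fun k => gaussianReal (my k) vy := by
      rw [pi_gaussian_eq' my hvy]; congr 1; ext w; rw [hprodY w]
    rw [this]; infer_instance
  haveI : SigmaFinite (Mx.withDensity fun u => ENNReal.ofReal (gx u)) := by
    have : (Mx.withDensity fun u => ENNReal.ofReal (gx u))
        = Measure.pi fun j => gaussianReal (mx' j) vx := by
      rw [pi_gaussian_eq' mx' hvx]; congr 1; ext u; rw [hprodX' u]
    rw [this]; infer_instance
  haveI : SigmaFinite (My.withDensity fun w => ENNReal.ofReal (gy w)) := by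
    have : (My.withDensity fun w => ENNReal.ofReal (gy w))
        = Measure.pi fun k => gaussianReal (my' k) vy := by
      rw [pi_gaussian_eq' my' hvy]; congr 1; ext w; rw [hprodY' w]
    rw [this]; infer_instance
  have hP : (Measure.pi fun j => gaussianReal (mx j) vx).prod
      (Measure.pi fun k => gaussianReal (my k) vy) = M.withDensity F := by
    rw [pi_gaussian_eq' mx hvx, pi_gaussian_eq' my hvy]
    simp_rw [hprodX, hprodY]
    rw [prod_withDensity_eq' Mx My (hfxm.ennreal_ofReal) (hfym.ennreal_ofReal)]
    congr 1
    ext z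
    rw [hF, ← ENNReal.ofReal_mul (hfxpos z.1).le]
  have hP' : (Measure.pi fun j => gaussianReal (mx' j) vx).prod
      (Measure.pi fun k => gaussianReal (my' k) vy) = M.withDensity G := by
    rw [pi_gaussian_eq' mx' hvx, pi_gaussian_eq' my' hvy]
    simp_rw [hprodX', hprodY']
    rw [prod_withDensity_eq' Mx My (hgxm.ennreal_ofReal) (hgym.ennreal_ofReal)]
    congr 1
    ext z
    rw [hG, ← ENNReal.ofReal_mul (hgxpos z.1).le]
  have hGpos : ∀ z, G z ≠ 0 := fun z => by
    rw [hG]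
    simp only [ne_eq, ENNReal.ofReal_eq_zero, not_le]
    exact mul_pos (hgxpos z.1) (hgypos z.2)
  have hGtop : ∀ z, G z ≠ ⊤ := fun z => ENNReal.ofReal_ne_top
  have hac : (Measure.pi fun j => gaussianReal (mx j) vx).prod
      (Measure.pi fun k => gaussianReal (my k) vy)
      ≪ (Measure.pi fun j => gaussianReal (mx' j) vx).prod
        (Measure.pi fun k => gaussianReal (my' k) vy) := by
    rw [hP, hP']
    exact (withDensity_absolutelyContinuous M F).trans
      (withDensity_absolutelyContinuous' hGm.aemeasurable (ae_of_all _ hGpos))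
  refine ⟨hac, ?_⟩
  haveI : IsProbabilityMeasure ((Measure.pi fun j => gaussianReal (mx j) vx).prod
      (Measure.pi fun k => gaussianReal (my k) vy)) := by infer_instance
  -- rnDeriv identification
  have hrn2 : ((Measure.pi fun j => gaussianReal (mx j) vx).prod
      (Measure.pi fun k => gaussianReal (my k) vy)).rnDeriv M =ᵐ[M] F := by
    rw [hP]; exact Measure.rnDeriv_withDensity M hFm
  have hrn1 : ((Measure.pi fun j => gaussianReal (mx j) vx).prod
      (Measure.pi fun k => gaussianReal (my k) vy)).rnDeriv
      ((Measure.pi fun j => gaussianReal (mx' j) vx).prod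
        (Measure.pi fun k => gaussianReal (my' k) vy))
      =ᵐ[M] fun z => (G z)⁻¹ * ((Measure.pi fun j => gaussianReal (mx j) vx).prod
        (Measure.pi fun k => gaussianReal (my k) vy)).rnDeriv M z := by
    rw [hP']
    exact Measure.rnDeriv_withDensity_right _ M hGm.aemeasurable
      (ae_of_all _ hGpos) (ae_of_all _ hGtop)
  have hrn : ((Measure.pi fun j => gaussianReal (mx j) vx).prod
      (Measure.pi fun k => gaussianReal (my k) vy)).rnDeriv
      ((Measure.pi fun j => gaussianReal (mx' j) vx).prod
        (Measure.pi fun k => gaussianReal (my' k) vy))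
      =ᵐ[M] fun z => (G z)⁻¹ * F z := by
    filter_upwards [hrn1, hrn2] with z h1 h2
    rw [h1, h2]
  -- the lintegral
  rw [hP'] at hrn
  rw [hP', lintegral_withDensity_eq_lintegral_mul M hGm
    ((Measure.measurable_rnDeriv _ _).pow measurable_const)]
  have hcongr : ∀ᵐ z ∂M, (G * fun z => (((Measure.pi fun j => gaussianReal (mx j) vx).prod
      (Measure.pi fun k => gaussianReal (my k) vy)).rnDeriv (M.withDensity G) z) ^ α) z
      = ENNReal.ofReal ((fx z.1 ^ α * gx z.1 ^ (1 - α)) * (fy z.2 ^ α * gy z.2 ^ (1 - α))) := by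
    filter_upwards [hrn] with z hz
    simp only [Pi.mul_apply]
    rw [hz]
    have := pt_density' (mul_pos (hfxpos z.1) (hfypos z.2))
      (mul_pos (hgxpos z.1) (hgypos z.2)) α
    rw [hF, hG, this]
    congr 1
    rw [Real.mul_rpow (hfxpos z.1).le (hfypos z.2).le,
      Real.mul_rpow (hgxpos z.1).le (hgypos z.2).le]
    ring
  rw [lintegral_congr_ae hcongr]
  -- factorize
  have hfactor : ∀ z : (Fin dx → ℝ) × (Fin K → ℝ),
      ENNReal.ofReal ((fx z.1 ^ α * gx z.1 ^ (1 - α)) * (fy z.2 ^ α * gy z.2 ^ (1 - α)))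
      = (fun u => ∏ j, ENNReal.ofReal (gaussianPDFReal (mx j) vx (u j) ^ α
            * gaussianPDFReal (mx' j) vx (u j) ^ (1 - α))) z.1
        * (fun w => ∏ k, ENNReal.ofReal (gaussianPDFReal (my k) vy (w k) ^ α
            * gaussianPDFReal (my' k) vy (w k) ^ (1 - α))) z.2 := by
    intro z
    rw [ENNReal.ofReal_mul (mul_nonneg (Real.rpow_nonneg (hfxpos z.1).le _) (Real.rpow_nonneg (hgxpos z.1).le _))]
    congr 1
    · rw [hfx, hgx, ← Real.finset_prod_rpow _ _ (fun j _ => (gaussianPDFReal_nonneg _ _ _)) α,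
        ← Real.finset_prod_rpow _ _ (fun j _ => (gaussianPDFReal_nonneg _ _ _)) (1 - α),
        ← Finset.prod_mul_distrib,
        ENNReal.ofReal_prod_of_nonneg fun j _ => mul_nonneg (Real.rpow_nonneg (gaussianPDFReal_nonneg _ _ _) _) (Real.rpow_nonneg (gaussianPDFReal_nonneg _ _ _) _)]
    · rw [hfy, hgy, ← Real.finset_prod_rpow _ _ (fun k _ => (gaussianPDFReal_nonneg _ _ _)) α,
        ← Real.finset_prod_rpow _ _ (fun k _ => (gaussianPDFReal_nonneg _ _ _)) (1 - α),
        ← Finset.prod_mul_distrib,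
        ENNReal.ofReal_prod_of_nonneg fun k _ => mul_nonneg (Real.rpow_nonneg (gaussianPDFReal_nonneg _ _ _) _) (Real.rpow_nonneg (gaussianPDFReal_nonneg _ _ _) _)]
  simp_rw [hfactor]
  have hmx : Measurable fun u : Fin dx → ℝ => ∏ j, ENNReal.ofReal
      (gaussianPDFReal (mx j) vx (u j) ^ α * gaussianPDFReal (mx' j) vx (u j) ^ (1 - α)) :=
    Finset.measurable_prod _ fun j _ =>
      ((((measurable_gaussianPDFReal _ _).comp (measurable_pi_apply j)).pow measurable_const).mul
        (((measurable_gaussianPDFReal _ _).comp (measurable_pi_apply j)).pow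
          measurable_const)).ennreal_ofReal
  have hmy : Measurable fun w : Fin K → ℝ => ∏ k, ENNReal.ofReal
      (gaussianPDFReal (my k) vy (w k) ^ α * gaussianPDFReal (my' k) vy (w k) ^ (1 - α)) :=
    Finset.measurable_prod _ fun k _ =>
      ((((measurable_gaussianPDFReal _ _).comp (measurable_pi_apply k)).pow measurable_const).mul
        (((measurable_gaussianPDFReal _ _).comp (measurable_pi_apply k)).pow
          measurable_const)).ennreal_ofReal
  rw [hM, lintegral_prod_mul hmx.aemeasurable hmy.aemeasurable, hMx, hMy,
    lintegral_pi_prod' _ (fun j t => ENNReal.ofReal (gaussianPDFReal (mx j) vx t ^ α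
      * gaussianPDFReal (mx' j) vx t ^ (1 - α))) (fun j => ((((measurable_gaussianPDFReal _ _)).pow measurable_const).mul
      (((measurable_gaussianPDFReal _ _)).pow measurable_const)).ennreal_ofReal),
    lintegral_pi_prod' _ (fun k t => ENNReal.ofReal (gaussianPDFReal (my k) vy t ^ α
      * gaussianPDFReal (my' k) vy t ^ (1 - α))) (fun k => ((((measurable_gaussianPDFReal _ _)).pow measurable_const).mul
      (((measurable_gaussianPDFReal _ _)).pow measurable_const)).ennreal_ofReal)]
  have hix : ∀ j, ∫⁻ t, ENNReal.ofReal (gaussianPDFReal (mx j) vx t ^ α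
      * gaussianPDFReal (mx' j) vx t ^ (1 - α)) ∂volume
      = ENNReal.ofReal (rexp (α * (α - 1) * (mx j - mx' j) ^ 2 / (2 * vx))) :=
    fun j => gauss_rpow_lintegral' _ _ hvx α
  have hiy : ∀ k, ∫⁻ t, ENNReal.ofReal (gaussianPDFReal (my k) vy t ^ α
      * gaussianPDFReal (my' k) vy t ^ (1 - α)) ∂volume
      = ENNReal.ofReal (rexp (α * (α - 1) * (my k - my' k) ^ 2 / (2 * vy))) :=
    fun k => gauss_rpow_lintegral' _ _ hvy α
  simp_rw [hix, hiy]
  rw [← ENNReal.ofReal_prod_of_nonneg (fun j _ => (Real.exp_nonneg _)),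
    ← ENNReal.ofReal_prod_of_nonneg (fun k _ => (Real.exp_nonneg _)),
    ← Real.exp_sum, ← Real.exp_sum,
    ← ENNReal.ofReal_mul (Real.exp_nonneg _), ← Real.exp_add]

/-- **RDP of generating one DP-CDA synthetic sample from a fixed `l`-subset.**
For two neighboring `l`-tuples of labeled points (features norm-clipped at `c`, labels
one-hot vectors in `ℝ^K`), the order-`α` Rényi divergence between the corresponding
product Gaussian output measures on `ℝ^{d_x} × ℝ^K` (feature noise `σ_x`, label noise
`σ_y`, means the `l`-point averages) is at most `(α/l²)(2c²/σ_x² + 1/σ_y²)`. -/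
theorem dpcda_single_sample_rdp (l dx K : ℕ) (hl : 1 ≤ l) (hdx : 1 ≤ dx) (hK : 1 ≤ K)
    (c σx σy α : ℝ) (hc : 0 < c) (hσx : 0 < σx) (hσy : 0 < σy) (hα : 1 < α)
    (x x' : Fin l → (Fin dx → ℝ)) (y y' : Fin l → (Fin K → ℝ))
    (hx : ∀ i, Real.sqrt (∑ j, x i j ^ 2) ≤ c)
    (hx' : ∀ i, Real.sqrt (∑ j, x' i j ^ 2) ≤ c)
    (hy : ∀ i, ∃ k, y i = Pi.single k (1 : ℝ))
    (hy' : ∀ i, ∃ k, y' i = Pi.single k (1 : ℝ))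
    (hneighbor : ∃ j, (x j ≠ x' j ∨ y j ≠ y' j) ∧
      ∀ i, i ≠ j → x i = x' i ∧ y i = y' i) :
    renyiDiv α
        ((Measure.pi fun jx => gaussianReal ((l : ℝ)⁻¹ * ∑ i, x i jx) (σx ^ 2).toNNReal).prod
          (Measure.pi fun k => gaussianReal ((l : ℝ)⁻¹ * ∑ i, y i k) (σy ^ 2).toNNReal))
        ((Measure.pi fun jx => gaussianReal ((l : ℝ)⁻¹ * ∑ i, x' i jx) (σx ^ 2).toNNReal).prod
          (Measure.pi fun k => gaussianReal ((l : ℝ)⁻¹ * ∑ i, y' i k) (σy ^ 2).toNNReal))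
      ≤ ((α / l ^ 2 * (2 * c ^ 2 / σx ^ 2 + 1 / σy ^ 2) : ℝ) : EReal) := by
  have hl0 : (0:ℝ) < l := by exact_mod_cast hl
  have hα1 : (0:ℝ) < α - 1 := by linarith
  have hvx : (σx ^ 2).toNNReal ≠ 0 := by
    simp only [ne_eq, Real.toNNReal_eq_zero, not_le]
    positivity
  have hvy : (σy ^ 2).toNNReal ≠ 0 := by
    simp only [ne_eq, Real.toNNReal_eq_zero, not_le]
    positivity
  have hvxr : (((σx ^ 2).toNNReal : ℝ)) = σx ^ 2 := Real.coe_toNNReal _ (sq_nonneg σx)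
  have hvyr : (((σy ^ 2).toNNReal : ℝ)) = σy ^ 2 := Real.coe_toNNReal _ (sq_nonneg σy)
  obtain ⟨hac, hL⟩ := gaussian_prod_renyi_integral
    (fun jx => (l : ℝ)⁻¹ * ∑ i, x i jx) (fun jx => (l : ℝ)⁻¹ * ∑ i, x' i jx)
    (fun k => (l : ℝ)⁻¹ * ∑ i, y i k) (fun k => (l : ℝ)⁻¹ * ∑ i, y' i k) hvx hvy α
  rw [renyiDiv, if_pos hac, hL, ENNReal.log_ofReal_of_pos (Real.exp_pos _), Real.log_exp,
    ← EReal.coe_mul]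
  rw [EReal.coe_le_coe_iff]
  simp only [hvxr, hvyr]
  -- neighbor analysis
  obtain ⟨j0, -, hnb⟩ := hneighbor
  have hdiffx : ∀ jx, ((l : ℝ)⁻¹ * ∑ i, x i jx) - ((l : ℝ)⁻¹ * ∑ i, x' i jx)
      = (l : ℝ)⁻¹ * (x j0 jx - x' j0 jx) := by
    intro jx
    rw [← mul_sub]
    congr 1
    rw [← Finset.sum_sub_distrib]
    exact Finset.sum_eq_single j0 (fun i _ hne => by rw [(hnb i hne).1, sub_self])
      (fun h => absurd (Finset.mem_univ _) h)
  have hdiffy : ∀ k, ((l : ℝ)⁻¹ * ∑ i, y i k) - ((l : ℝ)⁻¹ * ∑ i, y' i k)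
      = (l : ℝ)⁻¹ * (y j0 k - y' j0 k) := by
    intro k
    rw [← mul_sub]
    congr 1
    rw [← Finset.sum_sub_distrib]
    exact Finset.sum_eq_single j0 (fun i _ hne => by rw [(hnb i hne).2, sub_self])
      (fun h => absurd (Finset.mem_univ _) h)
  -- x bound
  have hxsq : ∀ (i : Fin l), ∑ jx, x i jx ^ 2 ≤ c ^ 2 := by
    intro i
    have h0 : 0 ≤ ∑ jx, x i jx ^ 2 := Finset.sum_nonneg fun _ _ => sq_nonneg _
    calc ∑ jx, x i jx ^ 2 = Real.sqrt (∑ jx, x i jx ^ 2) ^ 2 := (Real.sq_sqrt h0).symm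
      _ ≤ c ^ 2 := pow_le_pow_left₀ (Real.sqrt_nonneg _) (hx i) 2
  have hxsq' : ∀ (i : Fin l), ∑ jx, x' i jx ^ 2 ≤ c ^ 2 := by
    intro i
    have h0 : 0 ≤ ∑ jx, x' i jx ^ 2 := Finset.sum_nonneg fun _ _ => sq_nonneg _
    calc ∑ jx, x' i jx ^ 2 = Real.sqrt (∑ jx, x' i jx ^ 2) ^ 2 := (Real.sq_sqrt h0).symm
      _ ≤ c ^ 2 := pow_le_pow_left₀ (Real.sqrt_nonneg _) (hx' i) 2
  have keyx : ∑ jx, (x j0 jx - x' j0 jx) ^ 2 ≤ 4 * c ^ 2 := by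
    have hCS := Finset.sum_mul_sq_le_sq_mul_sq Finset.univ (x j0) (x' j0)
    have hexp : ∑ jx, (x j0 jx - x' j0 jx) ^ 2
        = ∑ jx, x j0 jx ^ 2 + ∑ jx, x' j0 jx ^ 2 - 2 * ∑ jx, x j0 jx * x' j0 jx := by
      rw [Finset.mul_sum, ← Finset.sum_add_distrib, ← Finset.sum_sub_distrib]
      exact Finset.sum_congr rfl fun jx _ => by ring
    have h0a : 0 ≤ ∑ jx, x j0 jx ^ 2 := Finset.sum_nonneg fun _ _ => sq_nonneg _
    have h0b : 0 ≤ ∑ jx, x' j0 jx ^ 2 := Finset.sum_nonneg fun _ _ => sq_nonneg _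
    nlinarith [hCS, hxsq j0, hxsq' j0, h0a, h0b,
      sq_nonneg (c ^ 2 + ∑ jx, x j0 jx * x' j0 jx), sq_nonneg c, mul_pos hc hc]
  -- y bound
  have hsn : ∀ (p k : Fin K), 0 ≤ (Pi.single p 1 : Fin K → ℝ) k := by
    intro p k
    rw [Pi.single_apply]
    split <;> norm_num
  have hone : ∀ (p : Fin K), ∑ k, ((Pi.single p 1 : Fin K → ℝ) k) ^ 2 = 1 := by
    intro p
    rw [Finset.sum_eq_single p (fun b _ hb => by simp [Pi.single_apply, hb])
      (fun h => absurd (Finset.mem_univ _) h), Pi.single_eq_same, one_pow]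
  have keyy : ∑ k, (y j0 k - y' j0 k) ^ 2 ≤ 2 := by
    obtain ⟨p, hp⟩ := hy j0
    obtain ⟨q, hq⟩ := hy' j0
    rw [hp, hq]
    have hdot : 0 ≤ ∑ k, (Pi.single p 1 : Fin K → ℝ) k * (Pi.single q 1 : Fin K → ℝ) k :=
      Finset.sum_nonneg fun k _ => mul_nonneg (hsn p k) (hsn q k)
    have hexp : ∑ k, ((Pi.single p 1 : Fin K → ℝ) k - (Pi.single q 1 : Fin K → ℝ) k) ^ 2
        = ∑ k, ((Pi.single p 1 : Fin K → ℝ) k) ^ 2 + ∑ k, ((Pi.single q 1 : Fin K → ℝ) k) ^ 2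
          - 2 * ∑ k, (Pi.single p 1 : Fin K → ℝ) k * (Pi.single q 1 : Fin K → ℝ) k := by
      rw [Finset.mul_sum, ← Finset.sum_add_distrib, ← Finset.sum_sub_distrib]
      exact Finset.sum_congr rfl fun k _ => by ring
    rw [hexp, hone p, hone q]
    linarith
  -- assemble
  have hSx : ∑ jx, α * (α - 1) * (((l : ℝ)⁻¹ * ∑ i, x i jx) - (l : ℝ)⁻¹ * ∑ i, x' i jx) ^ 2
        / (2 * σx ^ 2)
      = (α * (α - 1) / (2 * σx ^ 2) * (l : ℝ)⁻¹ ^ 2) * ∑ jx, (x j0 jx - x' j0 jx) ^ 2 := by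
    rw [Finset.mul_sum]
    exact Finset.sum_congr rfl fun jx _ => by rw [hdiffx jx]; ring
  have hSy : ∑ k, α * (α - 1) * (((l : ℝ)⁻¹ * ∑ i, y i k) - (l : ℝ)⁻¹ * ∑ i, y' i k) ^ 2
        / (2 * σy ^ 2)
      = (α * (α - 1) / (2 * σy ^ 2) * (l : ℝ)⁻¹ ^ 2) * ∑ k, (y j0 k - y' j0 k) ^ 2 := by
    rw [Finset.mul_sum]
    exact Finset.sum_congr rfl fun k _ => by rw [hdiffy k]; ring
  rw [hSx, hSy]
  have hstep : (α - 1)⁻¹ * ((α * (α - 1) / (2 * σx ^ 2) * (l : ℝ)⁻¹ ^ 2)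
        * ∑ jx, (x j0 jx - x' j0 jx) ^ 2
      + (α * (α - 1) / (2 * σy ^ 2) * (l : ℝ)⁻¹ ^ 2) * ∑ k, (y j0 k - y' j0 k) ^ 2)
      = (α / (2 * σx ^ 2) * (l : ℝ)⁻¹ ^ 2) * ∑ jx, (x j0 jx - x' j0 jx) ^ 2
        + (α / (2 * σy ^ 2) * (l : ℝ)⁻¹ ^ 2) * ∑ k, (y j0 k - y' j0 k) ^ 2 := by
    field_simp
  rw [hstep]
  have hrhs : α / l ^ 2 * (2 * c ^ 2 / σx ^ 2 + 1 / σy ^ 2)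
      = (α / (2 * σx ^ 2) * (l : ℝ)⁻¹ ^ 2) * (4 * c ^ 2)
        + (α / (2 * σy ^ 2) * (l : ℝ)⁻¹ ^ 2) * 2 := by
    field_simp
    ring
  rw [hrhs]
  have hα0 : (0:ℝ) < α := by linarith
  gcongr
end

section
/- Let T ≥ 1, α > 1, ε' ≥ 0, and 0 < δ < 1. For each t ∈ {1,…,T}, let P_t and Q_t be probability measures on a measurable space X_t with D_α(P_t ‖ Q_t) ≤ ε'. Then for every measurable set S of the product space X_1 × ⋯ × X_T, (⊗_{t=1}^T P_t)(S) ≤ exp(T·ε' + log(1/δ)/(α − 1)) · (⊗_{t=1}^T Q_t)(S) + δ. (Releasing T independent outputs, each (α, ε')-RDP, yields (T·ε' + log(1/δ)/(α−1), δ)-differential privacy.) -/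
open MeasureTheory ProbabilityTheory Real
open scoped Classical

section Aux

open MeasureTheory.Measure

/-- Tonelli for a product of functions of the coordinates over a finite product measure. -/
theorem lintegral_fin_nat_prod_eq_prod' {n : ℕ} {E : Fin n → Type*}
    [∀ i, MeasurableSpace (E i)] (μ : ∀ i, Measure (E i)) [∀ i, SigmaFinite (μ i)]
    {f : (i : Fin n) → E i → ENNReal} (hf : ∀ i, Measurable (f i)) :
    ∫⁻ x : (i : Fin n) → E i, ∏ i, f i (x i) ∂Measure.pi μ = ∏ i, ∫⁻ x, f i x ∂μ i := by
  induction n with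
  | zero => simp
  | succ n ih =>
    calc
      _ = ∫⁻ x : E 0 × ((i : Fin n) → E (Fin.succ i)),
          f 0 x.1 * ∏ i : Fin n, f (Fin.succ i) (x.2 i)
            ∂((μ 0).prod (Measure.pi (fun i : Fin n => μ i.succ))) := by
        rw [← ((measurePreserving_piFinSuccAbove μ 0).symm).lintegral_comp_emb
          (MeasurableEquiv.measurableEmbedding _)]
        refine lintegral_congr fun x => ?_
        rw [Fin.prod_univ_succ]
        simp [MeasurableEquiv.piFinSuccAbove, Fin.insertNthEquiv, Fin.insertNth_zero,
          Fin.zero_succAbove]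
        rfl
      _ = (∫⁻ x, f 0 x ∂μ 0) * ∏ i : Fin n, ∫⁻ x, f (Fin.succ i) x ∂μ i.succ := by
        have hg : Measurable (fun y : (i : Fin n) → E i.succ => ∏ i, f i.succ (y i)) :=
          Finset.measurable_prod _ (fun i _ => (hf i.succ).comp (measurable_pi_apply i))
        refine (lintegral_prod_mul (hf 0).aemeasurable hg.aemeasurable).trans ?_
        rw [ih (fun i : Fin n => μ i.succ) (fun i => hf i.succ)]
      _ = ∏ i, ∫⁻ x, f i x ∂μ i := by rw [Fin.prod_univ_succ]

/-- From a bound on the Rényi divergence, extract absolute continuity and a bound on the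
`α`-moment of the Radon–Nikodym derivative. -/
theorem renyiDiv_extract {Y : Type*} [MeasurableSpace Y] (P Q : Measure Y)
    (α ε' : ℝ) (hα : 1 < α)
    (h : renyiDiv α P Q ≤ ((ε' : ℝ) : EReal)) :
    P ≪ Q ∧ ∫⁻ x, P.rnDeriv Q x ^ α ∂Q ≤ ENNReal.ofReal (Real.exp ((α - 1) * ε')) := by
  have hα1 : (0:ℝ) < α - 1 := by linarith
  by_cases hac : P ≪ Q
  · rw [renyiDiv, if_pos hac] at h
    refine ⟨hac, ?_⟩
    set I := ∫⁻ x, P.rnDeriv Q x ^ α ∂Q with hI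
    rcases eq_or_ne I 0 with h0 | h0
    · simp [h0]
    rcases eq_or_ne I ⊤ with ht | ht
    · rw [ht, ENNReal.log_top, EReal.coe_mul_top_of_pos (by positivity)] at h
      exact absurd (top_le_iff.mp h) (EReal.coe_ne_top _)
    · have hlog : ENNReal.log I = ((Real.log I.toReal : ℝ) : EReal) :=
        ENNReal.log_pos_real h0 ht
      rw [hlog, ← EReal.coe_mul] at h
      have hre : (α - 1)⁻¹ * Real.log I.toReal ≤ ε' := EReal.coe_le_coe_iff.mp h
      have hcancel : (α - 1) * (α - 1)⁻¹ = 1 := mul_inv_cancel₀ (ne_of_gt hα1)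
      have hL : Real.log I.toReal ≤ (α - 1) * ε' := by
        have hmul := mul_le_mul_of_nonneg_left hre hα1.le
        rwa [← mul_assoc, hcancel, one_mul] at hmul
      have hIpos : 0 < I.toReal := ENNReal.toReal_pos h0 ht
      have : I.toReal ≤ Real.exp ((α - 1) * ε') := by
        calc I.toReal = Real.exp (Real.log I.toReal) := (Real.exp_log hIpos).symm
        _ ≤ _ := Real.exp_le_exp.mpr hL
      rw [← ENNReal.ofReal_toReal ht]
      exact ENNReal.ofReal_le_ofReal this
  · rw [renyiDiv, if_neg hac] at h
    exact absurd (top_le_iff.mp h) (EReal.coe_ne_top _)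

/-- RDP-to-DP conversion for a single pair of measures. -/
theorem rdp_to_dp_single {Y : Type*} [MeasurableSpace Y] (μ ν : Measure Y)
    [IsFiniteMeasure μ] [SigmaFinite ν] (hac : μ ≪ ν)
    (α ε δ : ℝ) (hα : 1 < α) (hδ : 0 < δ)
    (hI : ∫⁻ x, μ.rnDeriv ν x ^ α ∂ν ≤ ENNReal.ofReal (Real.exp ((α - 1) * ε)))
    (S : Set Y) (hS : MeasurableSet S) :
    μ S ≤ ENNReal.ofReal (Real.exp (ε + Real.log (1 / δ) / (α - 1))) * ν S
      + ENNReal.ofReal δ := by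
  have hα1 : (0:ℝ) < α - 1 := by linarith
  set f := μ.rnDeriv ν with hf
  have hfm : Measurable f := Measure.measurable_rnDeriv μ ν
  set εh : ℝ := ε + Real.log (1 / δ) / (α - 1) with hεh
  set C : ENNReal := ENNReal.ofReal (Real.exp εh) with hC
  have hC0 : C ≠ 0 := by
    simp [hC, ENNReal.ofReal_eq_zero, not_le, Real.exp_pos]
  have hCt : C ≠ ⊤ := ENNReal.ofReal_ne_top
  set A : Set Y := {x | C < f x} with hA
  have hAm : MeasurableSet A := measurableSet_lt measurable_const hfm
  -- the tail bound
  have hCrpow : C ^ (α - 1) = ENNReal.ofReal (Real.exp (εh * (α - 1))) := by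
    rw [hC, Real.exp_mul]
    exact ENNReal.ofReal_rpow_of_pos (Real.exp_pos _)
  have htail : μ A ≤ ENNReal.ofReal δ := by
    have hpoint : ∀ x ∈ A, f x ≤ f x ^ α * (C ^ (α - 1))⁻¹ := by
      intro x hx
      have hCx : C < f x := hx
      have key : f x * C ^ (α - 1) ≤ f x ^ α := by
        rcases eq_or_ne (f x) ⊤ with hfx | hfx
        · rw [hfx, ENNReal.top_rpow_of_pos (by linarith)]
          exact le_top
        · have hfx0 : f x ≠ 0 := by
            intro h0
            rw [h0] at hCx
            exact (not_lt_of_ge (zero_le)) hCx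
          have : f x ^ α = f x ^ (1 : ℝ) * f x ^ (α - 1) := by
            rw [← ENNReal.rpow_add _ _ hfx0 hfx]; norm_num
          rw [this, ENNReal.rpow_one]
          exact mul_le_mul_right (ENNReal.rpow_le_rpow hCx.le hα1.le) _
      have hpow0 : C ^ (α - 1) ≠ 0 := by
        simp [ENNReal.rpow_eq_zero_iff, hC0, hCt]
      have hpowt : C ^ (α - 1) ≠ ⊤ := by
        simp [ENNReal.rpow_eq_top_iff, hC0, hCt]
      rw [← ENNReal.le_div_iff_mul_le (Or.inl hpow0) (Or.inl hpowt)] at key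
      rwa [ENNReal.div_eq_inv_mul, mul_comm] at key
    calc μ A = ∫⁻ x in A, f x ∂ν := (Measure.setLIntegral_rnDeriv hac A).symm
    _ ≤ ∫⁻ x in A, f x ^ α * (C ^ (α - 1))⁻¹ ∂ν :=
        setLIntegral_mono ((hfm.pow_const α).mul_const _) hpoint
    _ = (∫⁻ x in A, f x ^ α ∂ν) * (C ^ (α - 1))⁻¹ :=
        lintegral_mul_const _ (hfm.pow_const α)
    _ ≤ (∫⁻ x, f x ^ α ∂ν) * (C ^ (α - 1))⁻¹ :=
        mul_le_mul_left (setLIntegral_le_lintegral A _) _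
    _ ≤ ENNReal.ofReal (Real.exp ((α - 1) * ε)) * (C ^ (α - 1))⁻¹ :=
        mul_le_mul_left hI _
    _ = ENNReal.ofReal δ := by
        rw [hCrpow, ← div_eq_mul_inv,
          ← ENNReal.ofReal_div_of_pos (Real.exp_pos _), ← Real.exp_sub]
        congr 1
        have : εh * (α - 1) = (α - 1) * ε + Real.log (1 / δ) := by
          rw [hεh]; field_simp
        rw [this]
        have : (α - 1) * ε - ((α - 1) * ε + Real.log (1 / δ)) = Real.log δ := by
          rw [one_div, Real.log_inv]; ring
        rw [this, Real.exp_log hδ]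
  -- the main bound
  calc μ S ≤ μ (S ∩ Aᶜ) + μ A := by
        refine (measure_mono (show S ⊆ (S ∩ Aᶜ) ∪ A from fun x hx => ?_)).trans
          (measure_union_le _ _)
        by_cases hxA : x ∈ A
        · exact Or.inr hxA
        · exact Or.inl ⟨hx, hxA⟩
  _ ≤ C * ν S + ENNReal.ofReal δ := by
        refine add_le_add ?_ htail
        calc μ (S ∩ Aᶜ) = ∫⁻ x in S ∩ Aᶜ, f x ∂ν :=
              (Measure.setLIntegral_rnDeriv hac _).symm
        _ ≤ ∫⁻ _ in S ∩ Aᶜ, C ∂ν := by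
            refine setLIntegral_mono measurable_const fun x hx => ?_
            have : ¬ C < f x := hx.2
            exact not_lt.mp this
        _ = C * ν (S ∩ Aᶜ) := setLIntegral_const _ _
        _ ≤ C * ν S := mul_le_mul_right (measure_mono Set.inter_subset_left) _

end Aux

/-- **From `T`-fold independent RDP composition to `(ε, δ)`-DP.**
If `D_α(P_t‖Q_t) ≤ ε'` for each `t ∈ {1,…,T}`, then for every measurable set `S` of the
product space, `(⊗ₜ P_t)(S) ≤ exp(Tε' + log(1/δ)/(α−1)) · (⊗ₜ Q_t)(S) + δ`. -/
theorem rdp_composition_to_dp (T : ℕ) (hT : 1 ≤ T)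
    {X : Fin T → Type*} [∀ t, MeasurableSpace (X t)]
    (P Q : ∀ t, Measure (X t))
    [∀ t, IsProbabilityMeasure (P t)] [∀ t, IsProbabilityMeasure (Q t)]
    (α ε' δ : ℝ) (hα : 1 < α) (hε' : 0 ≤ ε') (hδ : 0 < δ) (hδ1 : δ < 1)
    (h : ∀ t, renyiDiv α (P t) (Q t) ≤ ((ε' : ℝ) : EReal)) :
    ∀ S : Set (∀ t, X t), MeasurableSet S →
      Measure.pi P S
        ≤ ENNReal.ofReal (Real.exp (T * ε' + Real.log (1 / δ) / (α - 1))) * Measure.pi Q S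
          + ENNReal.ofReal δ := by
  intro S hS
  have hext := fun t => renyiDiv_extract (P t) (Q t) α ε' hα (h t)
  set f : ∀ t, X t → ENNReal := fun t => (P t).rnDeriv (Q t) with hfdef
  have hfm : ∀ t, Measurable (f t) := fun t => Measure.measurable_rnDeriv _ _
  set g : (∀ t, X t) → ENNReal := fun x => ∏ t, f t (x t) with hgdef
  have hgm : Measurable g :=
    Finset.measurable_prod _ (fun t _ => (hfm t).comp (measurable_pi_apply t))
  have key : (Measure.pi Q).withDensity g = Measure.pi P := by
    refine (Measure.pi_eq fun s hs => ?_).symm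
    rw [withDensity_apply _ (MeasurableSet.univ_pi hs)]
    have hswap : ∫⁻ x in Set.pi Set.univ s, g x ∂Measure.pi Q
        = ∫⁻ x, ∏ t, (s t).indicator (f t) (x t) ∂Measure.pi Q := by
      rw [← lintegral_indicator (MeasurableSet.univ_pi hs) _]
      refine lintegral_congr fun x => ?_
      by_cases hx : x ∈ Set.pi Set.univ s
      · rw [Set.indicator_of_mem hx]
        exact Finset.prod_congr rfl fun t _ =>
          (Set.indicator_of_mem (hx t (Set.mem_univ t)) _).symm
      · rw [Set.indicator_of_notMem hx]
        rw [Set.mem_univ_pi, not_forall] at hx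
        obtain ⟨t, ht⟩ := hx
        exact (Finset.prod_eq_zero (Finset.mem_univ t)
          (Set.indicator_of_notMem ht _)).symm
    rw [hswap, lintegral_fin_nat_prod_eq_prod' Q (fun t => (hfm t).indicator (hs t))]
    refine Finset.prod_congr rfl fun t _ => ?_
    rw [lintegral_indicator (hs t) _, ← withDensity_apply _ (hs t),
      Measure.withDensity_rnDeriv_eq _ _ (hext t).1]
  have hac : Measure.pi P ≪ Measure.pi Q := by
    rw [← key]; exact withDensity_absolutelyContinuous _ _
  have hrn : (Measure.pi P).rnDeriv (Measure.pi Q) =ᵐ[Measure.pi Q] g := by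
    rw [← key]; exact Measure.rnDeriv_withDensity _ hgm
  have hα1 : (0:ℝ) < α - 1 := by linarith
  have hI : ∫⁻ x, (Measure.pi P).rnDeriv (Measure.pi Q) x ^ α ∂(Measure.pi Q)
      ≤ ENNReal.ofReal (Real.exp ((α - 1) * ((T : ℝ) * ε'))) := by
    calc ∫⁻ x, (Measure.pi P).rnDeriv (Measure.pi Q) x ^ α ∂(Measure.pi Q)
        = ∫⁻ x, g x ^ α ∂(Measure.pi Q) :=
          lintegral_congr_ae (hrn.mono fun x hx => by dsimp only; rw [hx])
    _ = ∫⁻ x, ∏ t, f t (x t) ^ α ∂(Measure.pi Q) := by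
          refine lintegral_congr fun x => ?_
          rw [hgdef]
          exact (ENNReal.prod_rpow_of_nonneg (show (0:ℝ) ≤ α by linarith)).symm
    _ = ∏ t, ∫⁻ x, f t x ^ α ∂(Q t) :=
          lintegral_fin_nat_prod_eq_prod' Q (fun t => (hfm t).pow_const α)
    _ ≤ ∏ _t : Fin T, ENNReal.ofReal (Real.exp ((α - 1) * ε')) :=
          Finset.prod_le_prod' fun t _ => (hext t).2
    _ = ENNReal.ofReal (Real.exp ((α - 1) * ((T : ℝ) * ε'))) := by
          rw [Finset.prod_const, Finset.card_univ, Fintype.card_fin,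
            ← ENNReal.ofReal_pow (Real.exp_pos _).le, ← Real.exp_nat_mul]
          ring_nf
  have := rdp_to_dp_single (Measure.pi P) (Measure.pi Q) hac α ((T : ℝ) * ε') δ hα hδ hI S hS
  exact this
end
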